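/- arXiv:2305.06479 — 11 statements merged into one kernel-verified Lean document; each statement's English description precedes it below -/
import Mathlib

section
/- If w is an efficient vector for a reciprocal matrix A, and D is a positive diagonal matrix, then Dw is an efficient vector for DAD^{-1}. -/
/-- A positive reciprocal (pairwise comparison) matrix. -/
def Reciprocal {n : ℕ} (A : Matrix (Fin n) (Fin n) ℝ) : Prop :=
  (∀ i j, 0 < A i j) ∧ ∀ i j, A j i = (A i j)⁻¹

/-- A positive vector `w` is efficient for `A` (Pareto optimality). -/
def Efficient {n : ℕ} (A : Matrix (Fin n) (Fin n) ℝ) (w : Fin n → ℝ) : Prop :=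
  (∀ i, 0 < w i) ∧ ∀ v : Fin n → ℝ, (∀ i, 0 < v i) →
    (∀ i j, |A i j - v i / v j| ≤ |A i j - w i / w j|) →
    ∀ i j, v i / v j = w i / w j

/-! Writing a competitor of `D w` as `D u`, the entrywise errors of `D A D⁻¹` against `D u` are those
of `A` against `u`, scaled by the positive factors `d i / d j`; so domination of `D w` by `D u` is
domination of `w` by `u`, and efficiency of `w` forces `u` and `w` to have the same ratios. -/

lemma abs_mul_div_sub_mul_div_mul {a d₁ d₂ x₁ x₂ : ℝ} (hd₁ : 0 < d₁) (hd₂ : 0 < d₂) :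
    |d₁ * a / d₂ - d₁ * x₁ / (d₂ * x₂)| = d₁ / d₂ * |a - x₁ / x₂| := by
  rw [mul_div_mul_comm, mul_div_right_comm, ← mul_sub, abs_mul, abs_of_pos (div_pos hd₁ hd₂)]

theorem stmt_0_general {n : ℕ} (A : Matrix (Fin n) (Fin n) ℝ)
    (w : Fin n → ℝ) (d : Fin n → ℝ) (hd : ∀ i, 0 < d i)
    (hw : Efficient A w) :
    Efficient (fun i j => d i * A i j / d j) (fun i => d i * w i) := by
  obtain ⟨hw_pos, hw_eff⟩ := hw
  refine ⟨fun i => mul_pos (hd i) (hw_pos i), fun v hv hle i j => ?_⟩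
  set u : Fin n → ℝ := fun k => v k / d k
  have hu : ∀ k, 0 < u k := fun k => div_pos (hv k) (hd k)
  have hv_eq : v = fun k => d k * u k := funext fun k => (mul_div_cancel₀ _ (hd k).ne').symm
  rw [hv_eq] at hle ⊢
  have hu_le : ∀ i j, |A i j - u i / u j| ≤ |A i j - w i / w j| := fun i j => by
    have h := hle i j
    rwa [abs_mul_div_sub_mul_div_mul (hd i) (hd j),
      abs_mul_div_sub_mul_div_mul (hd i) (hd j),
      mul_le_mul_iff_right₀ (div_pos (hd i) (hd j))] at h
  rw [mul_div_mul_comm, mul_div_mul_comm, hw_eff u hu hu_le i j]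

/-- Efficiency is preserved under positive diagonal similarity:
if `w` is efficient for `A` and `D = diag d` with `d` positive, then
`Dw` is efficient for `D A D⁻¹`. -/
theorem stmt_0 {n : ℕ} (A : Matrix (Fin n) (Fin n) ℝ) (hA : Reciprocal A)
    (w : Fin n → ℝ) (d : Fin n → ℝ) (hd : ∀ i, 0 < d i)
    (hw : Efficient A w) :
    Efficient (fun i j => d i * A i j / d j) (fun i => d i * w i) :=
  stmt_0_general A w d hd hw
end

section
/- A positive vector w is efficient for a reciprocal matrix A if and only if the digraph G(A,w), with vertex set {1,...,n} and a directed edge from i to j (i≠j) whenever w_i/w_j >= a_{ij}, is strongly connected. -/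
/-!
If `v` is at least as close to `A` as `w` entrywise, then along every edge `i → j` of
`G(A, w)` (where `w i / w j ≥ A i j`) the ratio `v i / v j` cannot exceed `w i / w j`, i.e.
`v / w` increases along edges. Strong connectivity therefore forces `v / w` to be constant, so `v`
is proportional to `w`.

Conversely, if some `i` does not reach `j`, let `S` be the set of vertices reaching `j`. No edge
enters `S` from outside, so `w p / w q < A p q` for `p ∉ S`, `q ∈ S`. Shrinking `w` on `S` by a
factor `t < 1` close enough to `1` moves every ratio across the cut towards `A` without passing it,
giving a vector that dominates `w` but is not proportional to it.
-/

open Relation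

lemma le_of_abs_sub_le_abs_sub {a x y : ℝ} (hay : a ≤ y) (h : |a - x| ≤ |a - y|) :
    x ≤ y := by
  rw [abs_of_nonpos (sub_nonpos.2 hay)] at h
  linarith [neg_abs_le (a - x)]

lemma Set.Finite.exists_pos_lt_one_forall_lt {s : Set ℝ} (hs : s.Finite)
    (h : ∀ x ∈ s, x < 1) :
    ∃ t, 0 < t ∧ t < 1 ∧ ∀ x ∈ s, x < t := by
  obtain ⟨t, hlt, hgt⟩ :=
    (hs.insert 0).exists_between' (Set.finite_singleton 1) (by simpa using h)
  exact ⟨t, hlt 0 (Set.mem_insert _ _), hgt 1 rfl,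
    fun x hx => hlt x (Set.mem_insert_of_mem _ hx)⟩

section

variable {ι : Type*}

/-- The edge relation of the digraph `G(A, w)`. -/
def efficiencyGraph (A : Matrix ι ι ℝ) (w : ι → ℝ) (a b : ι) : Prop :=
  a ≠ b ∧ A a b ≤ w a / w b

variable {A : Matrix ι ι ℝ} {v w : ι → ℝ}

lemma div_le_div_of_efficiencyGraph (hv : ∀ i, 0 < v i) (hw : ∀ i, 0 < w i)
    (hdom : ∀ i j, |A i j - v i / v j| ≤ |A i j - w i / w j|) {a b : ι}
    (hab : efficiencyGraph A w a b) : v a / w a ≤ v b / w b := by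
  have hvw := le_of_abs_sub_le_abs_sub hab.2 (hdom a b)
  rw [div_le_div_iff₀ (hv b) (hw b)] at hvw
  rw [div_le_div_iff₀ (hw a) (hw b)]
  linarith

lemma div_le_div_of_reflTransGen (hv : ∀ i, 0 < v i) (hw : ∀ i, 0 < w i)
    (hdom : ∀ i j, |A i j - v i / v j| ≤ |A i j - w i / w j|) {a b : ι}
    (hab : ReflTransGen (efficiencyGraph A w) a b) : v a / w a ≤ v b / w b := by
  induction hab with
  | refl => exact le_rfl
  | tail _ hbc ih => exact ih.trans (div_le_div_of_efficiencyGraph hv hw hdom hbc)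

open Classical in
noncomputable def rescaleOn (S : Set ι) (t : ℝ) (w : ι → ℝ) (k : ι) : ℝ :=
  if k ∈ S then t * w k else w k

variable {S : Set ι} {t : ℝ} {p q : ι}

lemma rescaleOn_pos (ht : 0 < t) (hw : ∀ i, 0 < w i) (k : ι) : 0 < rescaleOn S t w k := by
  unfold rescaleOn
  split_ifs
  exacts [mul_pos ht (hw k), hw k]

lemma rescaleOn_div_of_mem_iff (ht : t ≠ 0) (h : p ∈ S ↔ q ∈ S) :
    rescaleOn S t w p / rescaleOn S t w q = w p / w q := by
  by_cases hp : p ∈ S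
  · simp only [rescaleOn, if_pos hp, if_pos (h.1 hp), mul_div_mul_left _ _ ht]
  · simp only [rescaleOn, if_neg hp, if_neg (mt h.2 hp)]

lemma rescaleOn_div_of_mem_of_notMem (hp : p ∈ S) (hq : q ∉ S) :
    rescaleOn S t w p / rescaleOn S t w q = t * (w p / w q) := by
  simp only [rescaleOn, if_pos hp, if_neg hq, mul_div_assoc]

lemma rescaleOn_div_of_notMem_of_mem (hp : p ∉ S) (hq : q ∈ S) :
    rescaleOn S t w p / rescaleOn S t w q = w p / w q / t := by
  simp only [rescaleOn, if_neg hp, if_pos hq, div_mul_eq_div_div_swap]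

end

section

variable {n : ℕ} {A : Matrix (Fin n) (Fin n) ℝ} {w : Fin n → ℝ}

lemma abs_sub_rescaleOn_div_le (hA : Reciprocal A) (hw : ∀ i, 0 < w i) {S : Set (Fin n)} {t : ℝ}
    (ht0 : 0 < t) (ht1 : t ≤ 1) (hcut : ∀ p q, p ∉ S → q ∈ S → w p / w q ≤ t * A p q)
    (p q : Fin n) : |A p q - rescaleOn S t w p / rescaleOn S t w q| ≤ |A p q - w p / w q| := by
  apply Set.abs_sub_right_of_mem_uIcc
  have hwpq : 0 ≤ w p / w q := (div_pos (hw p) (hw q)).le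
  by_cases hp : p ∈ S <;> by_cases hq : q ∈ S
  · rw [rescaleOn_div_of_mem_iff ht0.ne' (iff_of_true hp hq)]
    exact Set.left_mem_uIcc
  · rw [rescaleOn_div_of_mem_of_notMem hp hq]
    refine Set.mem_uIcc_of_ge ?_ (mul_le_of_le_one_left hwpq ht1)
    have hqp := hcut q p hq hp
    rw [hA.2 p q, ← div_eq_mul_inv, div_le_div_iff₀ (hw p) (hA.1 p q)] at hqp
    rw [← mul_div_assoc, le_div_iff₀ (hw q)]
    linarith
  · rw [rescaleOn_div_of_notMem_of_mem hp hq]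
    exact Set.mem_uIcc_of_le (le_div_self hwpq ht0 ht1) ((div_le_iff₀' ht0).2 (hcut p q hp hq))
  · rw [rescaleOn_div_of_mem_iff ht0.ne' (iff_of_false hp hq)]
    exact Set.left_mem_uIcc

theorem efficient_of_forall_reflTransGen (hw : ∀ i, 0 < w i)
    (hconn : ∀ i j, ReflTransGen (efficiencyGraph A w) i j) : Efficient A w := by
  refine ⟨hw, fun v hv hdom i j => ?_⟩
  have hij := (div_le_div_of_reflTransGen hv hw hdom (hconn i j)).antisymm
    (div_le_div_of_reflTransGen hv hw hdom (hconn j i))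
  rwa [div_eq_div_iff_div_eq_div' (hv j).ne' (hw i).ne']

theorem Efficient.reflTransGen (hA : Reciprocal A) (hE : Efficient A w) (i j : Fin n) :
    ReflTransGen (efficiencyGraph A w) i j := by
  set S := {k | ReflTransGen (efficiencyGraph A w) k j}
  have hj : j ∈ S := .refl
  by_contra hi
  change i ∉ S at hi
  have hcut : ∀ p q, p ∉ S → q ∈ S → w p / w q < A p q := fun p q hp hq => by
    by_contra! h
    exact hp (.head ⟨fun hpq => hp (hpq ▸ hq), h⟩ hq)
  obtain ⟨t, ht0, ht1, ht⟩ := Set.Finite.exists_pos_lt_one_forall_lt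
    (Set.toFinite ((fun pq : Fin n × Fin n => w pq.1 / w pq.2 / A pq.1 pq.2) ''
      {pq | pq.1 ∉ S ∧ pq.2 ∈ S}))
    (by
      rintro _ ⟨⟨p, q⟩, ⟨hp, hq⟩, rfl⟩
      exact (div_lt_one (hA.1 p q)).2 (hcut p q hp hq))
  have hdom := abs_sub_rescaleOn_div_le hA hE.1 ht0 ht1.le fun p q hp hq =>
    ((div_lt_iff₀ (hA.1 p q)).1 (ht _ ⟨(p, q), ⟨hp, hq⟩, rfl⟩)).le
  have hprop := hE.2 _ (rescaleOn_pos ht0 hE.1) hdom i j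
  rw [rescaleOn_div_of_notMem_of_mem hi hj, div_eq_iff ht0.ne',
    eq_comm, mul_eq_left₀ (div_pos (hE.1 i) (hE.1 j)).ne'] at hprop
  exact ht1.ne hprop

end

/-- `w` is efficient for `A` iff the digraph `G(A,w)`, with an edge `i → j`
(`i ≠ j`) whenever `w i / w j ≥ A i j`, is strongly connected. -/
theorem stmt_2 {n : ℕ} (A : Matrix (Fin n) (Fin n) ℝ) (hA : Reciprocal A)
    (w : Fin n → ℝ) (hw : ∀ i, 0 < w i) :
    Efficient A w ↔
      ∀ i j : Fin n, Relation.ReflTransGen (fun a b => a ≠ b ∧ A a b ≤ w a / w b) i j :=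
  ⟨Efficient.reflTransGen hA, efficient_of_forall_reflTransGen hw⟩
end

section
/- Let n >= 3, x > 0, and let S(x) be the n-by-n reciprocal matrix with all entries equal to 1 except the (1,2) entry equal to x and the (2,1) entry equal to 1/x. A positive vector w = (w_1,...,w_n) is efficient for S(x) if and only if either (w_2 <= w_i <= w_1 for all i in {3,...,n} and w_1 <= x w_2) or (w_2 >= w_i >= w_1 for all i in {3,...,n} and w_1 >= x w_2). -/
open Filter Topology Relation

theorem exists_one_lt_forall_mul_lt {ι : Type*} {s : Set ι} (hs : s.Finite) {r a : ι → ℝ}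
    (h : ∀ i ∈ s, r i < a i) : ∃ c, 1 < c ∧ ∀ i ∈ s, c * r i < a i := by
  have hnear : ∀ᶠ c in 𝓝 (1 : ℝ), ∀ i ∈ s, c * r i < a i :=
    (eventually_all_finite hs).2 fun i hi =>
      (continuous_id.mul continuous_const).continuousAt.eventually_lt continuousAt_const
        (by simpa using h i hi)
  obtain ⟨c, hc, hc1⟩ := ((hnear.filter_mono nhdsWithin_le_nhds).and
    (self_mem_nhdsWithin : ∀ᶠ c in 𝓝[>] (1 : ℝ), 1 < c)).exists
  exact ⟨c, hc1, hc⟩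

theorem le_of_abs_sub_le_abs_sub_s3 {a r s : ℝ} (ha : a ≤ r) (h : |a - s| ≤ |a - r|) : s ≤ r := by
  rw [abs_sub_comm a r, abs_of_nonneg (sub_nonneg.2 ha)] at h
  linarith [neg_abs_le (a - s)]

section

variable {n : ℕ} {A : Matrix (Fin n) (Fin n) ℝ} {w : Fin n → ℝ}

theorem Efficient.of_reflTransGen (hw : ∀ i, 0 < w i)
    (hconn : ∀ i j, ReflTransGen (fun i j => A i j ≤ w i / w j) i j) : Efficient A w := by
  refine ⟨hw, fun v hv hdom i j => ?_⟩
  have step : ∀ i j, A i j ≤ w i / w j → v i / w i ≤ v j / w j := fun i j hij => by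
    have := le_of_abs_sub_le_abs_sub_s3 hij (hdom i j)
    rw [div_le_div_iff₀ (hv j) (hw j)] at this
    rw [div_le_div_iff₀ (hw i) (hw j)]
    linarith
  have mono : ∀ i j, v i / w i ≤ v j / w j := fun i j => by
    induction hconn i j with
    | refl => exact le_rfl
    | tail _ hbc ih => exact ih.trans (step _ _ hbc)
  have hratio := le_antisymm (mono i j) (mono j i)
  rw [div_eq_div_iff (hw i).ne' (hw j).ne'] at hratio
  rw [div_eq_div_iff (hv j).ne' (hw j).ne']
  linarith

theorem Efficient.exists_le_div (hA : Reciprocal A) (he : Efficient A w) {T : Set (Fin n)}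
    {i₀ j₀ : Fin n} (hi₀ : i₀ ∉ T) (hj₀ : j₀ ∈ T) : ∃ i ∉ T, ∃ j ∈ T, A i j ≤ w i / w j := by
  classical
  by_contra! hcut
  obtain ⟨hw, hmin⟩ := he
  obtain ⟨c, hc, hcA⟩ :=
    exists_one_lt_forall_mul_lt (Set.toFinite {p : Fin n × Fin n | p.1 ∉ T ∧ p.2 ∈ T})
      (r := fun p => w p.1 / w p.2) (a := fun p => A p.1 p.2) fun p hp => hcut p.1 hp.1 p.2 hp.2
  have hc0 : 0 < c := one_pos.trans hc
  set s : Fin n → ℝ := fun i => if i ∈ T then 1 else c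
  have hs : ∀ i, 0 < s i := fun i => by
    by_cases hi : i ∈ T <;> simp [s, hi, hc0]
  have hv : ∀ i j, s i * w i / (s j * w j) = s i / s j * (w i / w j) := fun i j =>
    mul_div_mul_comm _ _ _ _
  have hdom : ∀ i j, |A i j - s i * w i / (s j * w j)| ≤ |A i j - w i / w j| := by
    intro i j
    have hr := div_pos (hw i) (hw j)
    rw [hv]
    refine Set.abs_sub_right_of_mem_uIcc ?_
    by_cases hi : i ∈ T <;> by_cases hj : j ∈ T <;> simp only [s, hi, hj, if_true, if_false]
    · simp
    · have := hcA (j, i) ⟨hj, hi⟩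
      rw [hA.2 i j, lt_inv_comm₀ (mul_pos hc0 (div_pos (hw j) (hw i))) (hA.1 i j), mul_inv,
        inv_div, ← one_div] at this
      exact Set.mem_uIcc.2
        (Or.inr ⟨this.le, mul_le_of_le_one_left hr.le ((div_le_one hc0).2 hc.le)⟩)
    · rw [div_one]
      exact Set.mem_uIcc.2 (Or.inl ⟨le_mul_of_one_le_left hr.le hc.le, (hcA (i, j) ⟨hi, hj⟩).le⟩)
    · simp [hc0.ne']
  have := hmin (fun i => s i * w i) (fun i => mul_pos (hs i) (hw i)) hdom i₀ j₀
  rw [hv] at this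
  simp only [s, hi₀, hj₀, if_true, if_false, div_one,
    mul_eq_right₀ (div_pos (hw i₀) (hw j₀)).ne'] at this
  exact hc.ne' this

theorem Relation.reflTransGen_of_triangles {α : Type*} {r : α → α → Prop} {p q m : α}
    (hmp : m ≠ p) (hmq : m ≠ q) (hqp : r q p) (htri : ∀ k, k ≠ p → k ≠ q → r p k ∧ r k q)
    (i j : α) : ReflTransGen r i j := by
  have to_p : ∀ i, ReflTransGen r i p := fun i => by
    by_cases hip : i = p
    · exact hip ▸ ReflTransGen.refl
    by_cases hiq : i = q
    · exact hiq ▸ ReflTransGen.single hqp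
    exact (ReflTransGen.single (htri i hip hiq).2).tail hqp
  have from_p : ∀ i, ReflTransGen r p i := fun i => by
    by_cases hip : i = p
    · exact hip ▸ ReflTransGen.refl
    by_cases hiq : i = q
    · exact hiq ▸ (ReflTransGen.single (htri m hmp hmq).1).tail (htri m hmp hmq).2
    exact ReflTransGen.single (htri i hip hiq).1
  exact (to_p i).trans (from_p j)

def IsSimplePerturbed (A : Matrix (Fin n) (Fin n) ℝ) (p q : Fin n) (x : ℝ) : Prop :=
  A p q = x ∧ A q p = x⁻¹ ∧ ∀ i j, ¬(i = p ∧ j = q) → ¬(i = q ∧ j = p) → A i j = 1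

def Sandwiched (w : Fin n → ℝ) (p q : Fin n) (x : ℝ) : Prop :=
  (∀ k, k ≠ p → k ≠ q → w q ≤ w k ∧ w k ≤ w p) ∧ w p ≤ x * w q

namespace IsSimplePerturbed

variable {p q : Fin n} {x : ℝ}

theorem symm (hA : IsSimplePerturbed A p q x) : IsSimplePerturbed A q p x⁻¹ :=
  ⟨hA.2.1, by rw [inv_inv, hA.1], fun i j h₁ h₂ => hA.2.2 i j h₂ h₁⟩

theorem reciprocal (hA : IsSimplePerturbed A p q x) (hx : 0 < x) : Reciprocal A := by
  obtain ⟨hpq, hqp, hone⟩ := hA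
  refine ⟨fun i j => ?_, fun i j => ?_⟩
  · by_cases h₁ : i = p ∧ j = q
    · rw [h₁.1, h₁.2, hpq]; exact hx
    by_cases h₂ : i = q ∧ j = p
    · rw [h₂.1, h₂.2, hqp]; exact inv_pos.2 hx
    rw [hone i j h₁ h₂]; exact one_pos
  · by_cases h₁ : i = p ∧ j = q
    · rw [h₁.1, h₁.2, hpq, hqp]
    by_cases h₂ : i = q ∧ j = p
    · rw [h₂.1, h₂.2, hpq, hqp, inv_inv]
    rw [hone i j h₁ h₂, hone j i (fun h => h₂ h.symm) (fun h => h₁ h.symm), inv_one]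

theorem efficient_of_sandwiched (hA : IsSimplePerturbed A p q x) (hx : 0 < x)
    (hw : ∀ i, 0 < w i) {m : Fin n} (hmp : m ≠ p) (hmq : m ≠ q) (h : Sandwiched w p q x) :
    Efficient A w := by
  refine Efficient.of_reflTransGen hw (Relation.reflTransGen_of_triangles hmp hmq ?_ ?_)
  · rw [hA.2.1, le_div_iff₀ (hw p), inv_mul_le_iff₀ hx]
    exact h.2
  · intro k hkp hkq
    rw [hA.2.2 p k (fun h => hkq h.2) (fun h => hkp h.2), one_le_div (hw k),
      hA.2.2 k q (fun h => hkp h.1) (fun h => hkq h.1), one_le_div (hw q)]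
    exact (h.1 k hkp hkq).symm

theorem separates_of_efficient (hA : IsSimplePerturbed A p q x) (hx : 0 < x)
    (he : Efficient A w) {i j : Fin n} {t : ℝ} (hi : w i < t) (hj : t ≤ w j) :
    (w q < t ∧ t ≤ w p ∧ w p ≤ x * w q) ∨ (w p < t ∧ t ≤ w q ∧ w q ≤ x⁻¹ * w p) := by
  obtain ⟨k, hk, l, hl, hkl⟩ :=
    he.exists_le_div (hA.reciprocal hx) (T := {k | t ≤ w k}) (not_le.2 hi) hj
  simp only [Set.mem_ofPred_eq, not_le] at hk hl
  have hw := he.1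
  by_cases hpq : k = p ∧ l = q
  · obtain ⟨rfl, rfl⟩ := hpq
    rw [hA.1, le_div_iff₀ (hw l), ← le_inv_mul_iff₀ hx] at hkl
    exact Or.inr ⟨hk, hl, hkl⟩
  by_cases hqp : k = q ∧ l = p
  · obtain ⟨rfl, rfl⟩ := hqp
    rw [hA.2.1, le_div_iff₀ (hw l), inv_mul_le_iff₀ hx] at hkl
    exact Or.inl ⟨hk, hl, hkl⟩
  rw [hA.2.2 k l hpq hqp, one_le_div (hw l)] at hkl
  linarith

theorem sandwiched_of_efficient_of_le (hA : IsSimplePerturbed A p q x) (hx : 0 < x)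
    (he : Efficient A w) (hqp : w q ≤ w p) : Sandwiched w p q x ∨ Sandwiched w q p x⁻¹ := by
  have hbetween : ∀ k, k ≠ p → k ≠ q → w q ≤ w k ∧ w k ≤ w p := by
    intro k _ _
    constructor
    · by_contra! hk
      rcases hA.separates_of_efficient hx he hk le_rfl with h | h <;> linarith [h.1]
    · by_contra! hk
      rcases hA.separates_of_efficient hx he hk le_rfl with h | h <;> linarith [h.2.1]
  by_cases hpx : w p ≤ x * w q
  · exact Or.inl ⟨hbetween, hpx⟩
  have hpq : w p = w q := by
    by_contra hne
    rcases hA.separates_of_efficient hx he (lt_of_le_of_ne hqp (Ne.symm hne)) le_rfl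
      with h | h <;> linarith [h.2.2, h.1]
  refine Or.inr ⟨fun k hkq hkp => ?_, ?_⟩
  · have := hbetween k hkp hkq
    constructor <;> linarith
  · rw [le_inv_mul_iff₀ hx]
    linarith

theorem efficient_iff (hA : IsSimplePerturbed A p q x) (hx : 0 < x) (hw : ∀ i, 0 < w i)
    {m : Fin n} (hmp : m ≠ p) (hmq : m ≠ q) :
    Efficient A w ↔ Sandwiched w p q x ∨ Sandwiched w q p x⁻¹ := by
  refine ⟨fun he => ?_, ?_⟩
  · rcases le_total (w q) (w p) with hqp | hpq
    · exact hA.sandwiched_of_efficient_of_le hx he hqp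
    · simpa only [inv_inv, or_comm] using
        hA.symm.sandwiched_of_efficient_of_le (inv_pos.2 hx) he hpq
  · rintro (h | h)
    · exact hA.efficient_of_sandwiched hx hw hmp hmq h
    · exact hA.symm.efficient_of_sandwiched (inv_pos.2 hx) hw hmq hmp h

end IsSimplePerturbed

end

/-- Characterization of the efficient vectors for a simple perturbed consistent
matrix `S(x)` (all entries 1 except the (1,2) entry `x` and (2,1) entry `1/x`). -/
theorem stmt_3 {n : ℕ} (hn : 3 ≤ n) (x : ℝ) (hx : 0 < x) (w : Fin n → ℝ)
    (hw : ∀ i, 0 < w i)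
    (S : Matrix (Fin n) (Fin n) ℝ)
    (hS : ∀ i j : Fin n, S i j =
      if i.val = 0 ∧ j.val = 1 then x
      else if i.val = 1 ∧ j.val = 0 then x⁻¹ else 1) :
    Efficient S w ↔
      ((∀ i : Fin n, 2 ≤ i.val →
          w ⟨1, by omega⟩ ≤ w i ∧ w i ≤ w ⟨0, by omega⟩) ∧
        w ⟨0, by omega⟩ ≤ x * w ⟨1, by omega⟩) ∨
      ((∀ i : Fin n, 2 ≤ i.val →
          w i ≤ w ⟨1, by omega⟩ ∧ w ⟨0, by omega⟩ ≤ w i) ∧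
        x * w ⟨1, by omega⟩ ≤ w ⟨0, by omega⟩) := by
  set p : Fin n := ⟨0, by omega⟩
  set q : Fin n := ⟨1, by omega⟩
  have hpert : IsSimplePerturbed S p q x := by
    refine ⟨by simp [hS, p, q], by simp [hS, p, q], fun i j h₁ h₂ => ?_⟩
    simp only [p, q, Fin.ext_iff] at h₁ h₂
    rw [hS, if_neg h₁, if_neg h₂]
  have hK : ∀ k : Fin n, 2 ≤ k.val ↔ k ≠ p ∧ k ≠ q := fun k => by
    simp only [p, q, ne_eq, Fin.ext_iff]
    omega
  rw [hpert.efficient_iff hx hw (m := ⟨2, by omega⟩) (by simp [p, Fin.ext_iff])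
    (by simp [q, Fin.ext_iff])]
  simp only [Sandwiched, hK, and_imp, le_inv_mul_iff₀ hx]
  refine or_congr Iff.rfl (and_congr_left' (forall_congr' fun k => ?_))
  exact ⟨fun h hkp hkq => (h hkq hkp).symm, fun h hkq hkp => (h hkp hkq).symm⟩
end

section
/- Let A be an n-by-n reciprocal matrix, w a positive n-vector, and k in {1,...,n}. Suppose the vector w(k) obtained by deleting entry k is efficient for the principal submatrix A(k) obtained by deleting row and column k. Then w is efficient for A if and only if min_{i≠k} w_i/a_{ik} <= w_k <= max_{i≠k} w_i/a_{ik}. -/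
open Set

lemma div_mem_uIcc_div_of_mem_uIcc {a c y t : ℝ} (ha : 0 ≤ a) (hc : 0 < c) (hy : 0 < y)
    (ht : t ∈ uIcc y c) : a / t ∈ uIcc (a / y) (a / c) := by
  rcases le_total y c with hyc | hcy
  · rw [uIcc_of_le hyc] at ht
    exact mem_uIcc.2 <| Or.inr ⟨div_le_div_of_nonneg_left ha (hy.trans_le ht.1) ht.2,
      div_le_div_of_nonneg_left ha hy ht.1⟩
  · rw [uIcc_of_ge hcy] at ht
    exact mem_uIcc.2 <| Or.inl ⟨div_le_div_of_nonneg_left ha (hc.trans_le ht.1) ht.2,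
      div_le_div_of_nonneg_left ha hc ht.1⟩

lemma div_const_mem_uIcc {c y t : ℝ} (a : ℝ) (ht : t ∈ uIcc y c) :
    t / a ∈ uIcc (y / a) (c / a) :=
  image_div_const_uIcc a y c ▸ mem_image_of_mem _ ht

lemma le_of_abs_sub_le_of_le {x y s : ℝ} (hyx : y ≤ x) (h : |x - s| ≤ |x - y|) : y ≤ s := by
  rw [abs_of_nonneg (sub_nonneg.2 hyx)] at h
  linarith [le_abs_self (x - s)]

lemma le_of_abs_sub_le_of_ge {x y s : ℝ} (hxy : x ≤ y) (h : |x - s| ≤ |x - y|) : s ≤ y := by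
  rw [abs_of_nonpos (sub_nonpos.2 hxy)] at h
  linarith [neg_abs_le (x - s)]

lemma Finset.exists_mem_forall_mem_uIcc_of_not_between {ι : Type*} {s : Finset ι}
    (hs : s.Nonempty) (c : ι → ℝ) {y : ℝ}
    (hy : ¬((∃ i ∈ s, c i ≤ y) ∧ ∃ i ∈ s, y ≤ c i)) :
    ∃ j ∈ s, c j ≠ y ∧ ∀ i ∈ s, c j ∈ Set.uIcc y (c i) := by
  rw [not_and_or] at hy
  rcases hy with hy | hy <;> push Not at hy
  · obtain ⟨j, hj, hmin⟩ := s.exists_min_image c hs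
    exact ⟨j, hj, (hy j hj).ne', fun i hi => Set.mem_uIcc_of_le (hy j hj).le (hmin i hi)⟩
  · obtain ⟨j, hj, hmax⟩ := s.exists_max_image c hs
    exact ⟨j, hj, (hy j hj).ne, fun i hi => Set.mem_uIcc_of_ge (hmax i hi) (hy j hj).le⟩

lemma div_eq_div_of_forall_eq_mul {ι : Type*} {v w : ι → ℝ} {ρ : ℝ} (hρ : ρ ≠ 0)
    (h : ∀ i, v i = ρ * w i) (i j : ι) : v i / v j = w i / w j := by
  rw [h i, h j, mul_div_mul_left _ _ hρ]

section

variable {m : ℕ} {A : Matrix (Fin m) (Fin m) ℝ} {w : Fin m → ℝ}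

/-- Replacing `w k` by `t` only changes row and column `k` of `(w i / w j)`, where the entries
`w i / t` and `t / w i` are monotone in `t` and agree with `A` at `t = w i / A i k`. -/
lemma Reciprocal.abs_sub_update_div_le (hA : Reciprocal A) (hw : ∀ i, 0 < w i) {k : Fin m}
    {t : ℝ} (ht₀ : 0 < t) (ht : ∀ i, i ≠ k → t ∈ uIcc (w k) (w i / A i k)) (i j : Fin m) :
    |A i j - Function.update w k t i / Function.update w k t j| ≤ |A i j - w i / w j| := by
  rcases eq_or_ne i k with rfl | hi
  · rcases eq_or_ne j i with rfl | hj
    · simp [div_self ht₀.ne', div_self (hw j).ne']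
    · have hAij : A i j = (w j / A j i) / w j := by
        rw [hA.2 j i, div_div_cancel_left' (hw j).ne']
      rw [Function.update_self, Function.update_of_ne hj, hAij]
      exact abs_sub_right_of_mem_uIcc (div_const_mem_uIcc (w j) (ht j hj))
  · rcases eq_or_ne j k with rfl | hj
    · have hAij : A i j = w i / (w i / A i j) := (div_div_cancel₀ (hw i).ne').symm
      rw [Function.update_self, Function.update_of_ne hi, hAij]
      exact abs_sub_right_of_mem_uIcc <| div_mem_uIcc_div_of_mem_uIcc (hw i).le
        (div_pos (hw i) (hA.1 i j)) (hw j) (ht i hi)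
    · rw [Function.update_of_ne hi, Function.update_of_ne hj]

theorem Efficient.exists_div_le_and_exists_le_div (hA : Reciprocal A) (hw : Efficient A w)
    {k : Fin m} (hk : ∃ i, i ≠ k) :
    (∃ i, i ≠ k ∧ w i / A i k ≤ w k) ∧ (∃ i, i ≠ k ∧ w k ≤ w i / A i k) := by
  by_contra hbetween
  have hs : (Finset.univ.erase k).Nonempty := by simpa [Finset.Nonempty] using hk
  obtain ⟨j, hj, hne, hmem⟩ :=
    Finset.exists_mem_forall_mem_uIcc_of_not_between hs (fun i => w i / A i k) (y := w k)
      (by simpa using hbetween)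
  have hjk : j ≠ k := Finset.ne_of_mem_erase hj
  have ht₀ : 0 < w j / A j k := div_pos (hw.1 j) (hA.1 j k)
  have hratio := hw.2 _
    (Function.forall_update_iff w (p := fun _ x => 0 < x) |>.2 ⟨ht₀, fun i _ => hw.1 i⟩)
    (hA.abs_sub_update_div_le hw.1 ht₀
      (fun i hi => hmem i (Finset.mem_erase.2 ⟨hi, Finset.mem_univ i⟩))) j k
  rw [Function.update_self, Function.update_of_ne hjk] at hratio
  exact hne (inv_injective ((mul_right_inj' (hw.1 j).ne').1 hratio))

end

theorem efficient_of_efficient_submatrix_succAbove {n : ℕ}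
    {A : Matrix (Fin (n + 1)) (Fin (n + 1)) ℝ} (hApos : ∀ i j, 0 < A i j)
    {w : Fin (n + 1) → ℝ} (hw : ∀ i, 0 < w i) {k : Fin (n + 1)}
    (hdel : Efficient (A.submatrix k.succAbove k.succAbove) (w ∘ k.succAbove))
    {i₁ i₂ : Fin (n + 1)} (hi₁ : i₁ ≠ k) (h₁ : w i₁ / A i₁ k ≤ w k)
    (hi₂ : i₂ ≠ k) (h₂ : w k ≤ w i₂ / A i₂ k) : Efficient A w := by
  refine ⟨hw, fun v hv hdom => ?_⟩
  have hoff : ∀ i j, i ≠ k → j ≠ k → v i / v j = w i / w j := by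
    intro i j hi hj
    obtain ⟨a, rfl⟩ := Fin.exists_succAbove_eq hi
    obtain ⟨b, rfl⟩ := Fin.exists_succAbove_eq hj
    exact hdel.2 (v ∘ k.succAbove) (fun _ => hv _) (fun _ _ => hdom _ _) a b
  have hvρ : ∀ i, i ≠ k → v i = v i₁ / w i₁ * w i := by
    intro i hi
    have := hoff i i₁ hi hi₁
    field_simp [(hv i₁).ne', (hw i₁).ne'] at this ⊢
    linarith
  set ρ := v i₁ / w i₁
  have hρ : 0 < ρ := div_pos (hv i₁) (hw i₁)
  set t := v k / ρ with ht_def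
  have ht : 0 < t := div_pos (hv k) hρ
  have hdom_k : ∀ i, i ≠ k → |A i k - w i / t| ≤ |A i k - w i / w k| := by
    intro i hi
    have hwt : w i / t = v i / v k := by
      rw [hvρ i hi, ht_def, div_div_eq_mul_div, mul_comm]
    rw [hwt]
    exact hdom i k
  have htle : t ≤ w k := by
    have hle : w i₁ / w k ≤ A i₁ k := (div_le_comm₀ (hApos i₁ k) (hw k)).1 h₁
    exact (div_le_div_iff_of_pos_left (hw i₁) (hw k) ht).1
      (le_of_abs_sub_le_of_le hle (hdom_k i₁ hi₁))
  have hlet : w k ≤ t := by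
    have hle : A i₂ k ≤ w i₂ / w k := (le_div_comm₀ (hw k) (hApos i₂ k)).1 h₂
    exact (div_le_div_iff_of_pos_left (hw i₂) ht (hw k)).1
      (le_of_abs_sub_le_of_ge hle (hdom_k i₂ hi₂))
  have hvk : v k = ρ * w k := by
    rw [← le_antisymm htle hlet, ht_def, mul_div_cancel₀ _ hρ.ne']
  refine div_eq_div_of_forall_eq_mul hρ.ne' fun i => ?_
  rcases eq_or_ne i k with rfl | hi
  · exact hvk
  · exact hvρ i hi

/-- Extension lemma: if `w(k)` is efficient for `A(k)`, then `w` is efficient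
for `A` iff `min_{i≠k} w i / A i k ≤ w k ≤ max_{i≠k} w i / A i k`. -/
theorem stmt_5 {n : ℕ} (hn : 1 ≤ n) (A : Matrix (Fin (n + 1)) (Fin (n + 1)) ℝ)
    (hA : Reciprocal A) (w : Fin (n + 1) → ℝ) (hw : ∀ i, 0 < w i)
    (k : Fin (n + 1))
    (hdel : Efficient (A.submatrix k.succAbove k.succAbove) (w ∘ k.succAbove)) :
    Efficient A w ↔
      ((∃ i, i ≠ k ∧ w i / A i k ≤ w k) ∧ (∃ i, i ≠ k ∧ w k ≤ w i / A i k)) := by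
  constructor
  · intro heff
    exact heff.exists_div_le_and_exists_le_div hA ⟨k.succAbove ⟨0, hn⟩, Fin.succAbove_ne _ _⟩
  · rintro ⟨⟨i₁, hi₁, h₁⟩, i₂, hi₂, h₂⟩
    exact efficient_of_efficient_submatrix_succAbove hA.1 hw hdel hi₁ h₁ hi₂ h₂
end

section
/- Let A be the n-by-n reciprocal matrix of block form [[B, J],[J, J]] where B is an s-by-s reciprocal matrix, s < n, and J denotes all-ones blocks. If w is efficient for A and Q is any (n-s)-by-(n-s) permutation matrix, then (I_s ⊕ Q) w is efficient for A. -/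
theorem Efficient.submatrix_perm {n : ℕ} {A : Matrix (Fin n) (Fin n) ℝ} {w : Fin n → ℝ}
    (hw : Efficient A w) (σ : Equiv.Perm (Fin n)) :
    Efficient (A.submatrix σ σ) (w ∘ σ) := by
  obtain ⟨hw_pos, hw_eff⟩ := hw
  refine ⟨fun i => hw_pos (σ i), fun v hv hle i j => ?_⟩
  have hv_eq := hw_eff (v ∘ σ.symm) (fun i => hv _) fun i j => by
    simpa using hle (σ.symm i) (σ.symm j)
  simpa using hv_eq (σ i) (σ j)

theorem Equiv.Perm.le_val_apply_of_forall_lt_fixed {n s : ℕ} {σ : Equiv.Perm (Fin n)}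
    (hσ : ∀ i : Fin n, i.val < s → σ i = i) {i : Fin n} (hi : s ≤ i.val) :
    s ≤ (σ i).val := by
  by_contra h
  have hi_fixed : σ i = i := σ.injective (hσ _ (not_le.mp h))
  omega

theorem Matrix.submatrix_perm_eq_of_eq_one_off_block {n s : ℕ} {A : Matrix (Fin n) (Fin n) ℝ}
    (hblock : ∀ i j : Fin n, s ≤ i.val ∨ s ≤ j.val → A i j = 1)
    {σ : Equiv.Perm (Fin n)} (hσ : ∀ i : Fin n, i.val < s → σ i = i) :
    A.submatrix σ σ = A := by
  ext i j
  rw [Matrix.submatrix_apply]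
  by_cases hi : s ≤ i.val
  · rw [hblock _ _ (Or.inl (σ.le_val_apply_of_forall_lt_fixed hσ hi)), hblock _ _ (Or.inl hi)]
  by_cases hj : s ≤ j.val
  · rw [hblock _ _ (Or.inr (σ.le_val_apply_of_forall_lt_fixed hσ hj)), hblock _ _ (Or.inr hj)]
  rw [hσ i (by omega), hσ j (by omega)]

theorem stmt_6_general {n s : ℕ} (A : Matrix (Fin n) (Fin n) ℝ)
    (hblock : ∀ i j : Fin n, s ≤ i.val ∨ s ≤ j.val → A i j = 1)
    (w : Fin n → ℝ) (hw : Efficient A w)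
    (σ : Equiv.Perm (Fin n)) (hσ : ∀ i : Fin n, i.val < s → σ i = i) :
    Efficient A (w ∘ σ.symm) := by
  have hσ_symm : ∀ i : Fin n, i.val < s → σ.symm i = i :=
    fun i hi => σ.symm_apply_eq.mpr (hσ i hi).symm
  simpa only [Matrix.submatrix_perm_eq_of_eq_one_off_block hblock hσ_symm] using
    hw.submatrix_perm σ.symm

/-- For a block perturbed consistent matrix, efficiency is preserved under
permutations of the last `n - s` entries. -/
theorem stmt_6 {n s : ℕ} (hs : s < n) (A : Matrix (Fin n) (Fin n) ℝ)
    (hA : Reciprocal A)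
    (hblock : ∀ i j : Fin n, s ≤ i.val ∨ s ≤ j.val → A i j = 1)
    (w : Fin n → ℝ) (hw : Efficient A w)
    (σ : Equiv.Perm (Fin n)) (hσ : ∀ i : Fin n, i.val < s → σ i = i) :
    Efficient A (w ∘ σ.symm) :=
  stmt_6_general A hblock w hw σ hσ
end

section
/- Let A be the n-by-n reciprocal matrix of block form [[B, J],[J, J]] with B an s-by-s reciprocal matrix and n > s. If w is a positive n-vector with w_p = w_q for some distinct p, q in {s+1,...,n}, then w is efficient for A if and only if w(p) is efficient for A(p). -/
/-!
`A` and `w` are obtained from `A(p)` and `w(p)` by duplicating the index `q` into position `p`: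
with `σ : Fin (n + 1) → Fin n` sending `p` to the position `q'` of `q` and `p.succAbove k` to `k`,
`A = A(p).submatrix σ σ` and `w = w(p) ∘ σ`, since rows and columns `p`, `q` of `A` are all ones.
Efficiency is invariant under such duplications: a competitor `y` for `B` lifts to `y ∘ σ`, and
conversely a competitor `v` for `B.submatrix σ σ` is constant on the fibres of `σ`, because there
the entry is `1` and the ratio `1` of the duplicated vector is already exact; so `v` descends.
-/

namespace Efficient

variable {m n : ℕ} {B : Matrix (Fin n) (Fin n) ℝ} {x : Fin n → ℝ} {σ : Fin m → Fin n}
  {τ : Fin n → Fin m}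

theorem of_submatrix (hστ : Function.LeftInverse σ τ)
    (h : Efficient (B.submatrix σ σ) (x ∘ σ)) : Efficient B x := by
  obtain ⟨hxpos, hopt⟩ := h
  refine ⟨fun k => hστ k ▸ hxpos (τ k), fun y hy hdom k l => ?_⟩
  have := hopt (y ∘ σ) (fun i => hy (σ i)) (fun i j => hdom (σ i) (σ j)) (τ k) (τ l)
  simpa only [Function.comp_apply, hστ k, hστ l] using this

theorem submatrix (hστ : Function.LeftInverse σ τ)
    (hdiag : ∀ i j, i ≠ j → σ i = σ j → B (σ i) (σ i) = 1)
    (h : Efficient B x) : Efficient (B.submatrix σ σ) (x ∘ σ) := by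
  obtain ⟨hxpos, hopt⟩ := h
  refine ⟨fun i => hxpos (σ i), fun v hv hdom => ?_⟩
  have hfibre : ∀ i j, σ i = σ j → v i = v j := by
    intro i j hij
    rcases eq_or_ne i j with rfl | hne
    · rfl
    have hle := hdom i j
    simp only [Matrix.submatrix_apply, Function.comp_apply, ← hij, hdiag i j hne hij,
      div_self (hxpos (σ i)).ne', sub_self, abs_zero, abs_nonpos_iff, sub_eq_zero] at hle
    exact (div_eq_one_iff_eq (hv j).ne').mp hle.symm
  have hv_eq : ∀ i, v i = v (τ (σ i)) := fun i => hfibre i _ (hστ (σ i)).symm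
  have hratio := hopt (v ∘ τ) (fun k => hv (τ k)) fun k l => by
    simpa only [Matrix.submatrix_apply, Function.comp_apply, hστ k, hστ l] using hdom (τ k) (τ l)
  intro i j
  rw [hv_eq i, hv_eq j]
  exact hratio (σ i) (σ j)

end Efficient

namespace Fin

variable {n : ℕ} {p : Fin (n + 1)} {q : Fin n}

theorem comp_succAbove_comp_insertNth_id {β : Type*} {g : Fin (n + 1) → β}
    (h : g p = g (p.succAbove q)) :
    (g ∘ p.succAbove) ∘ (p.insertNth q id : Fin (n + 1) → Fin n) = g := by
  funext i
  induction i using Fin.succAboveCases p <;> simp [h]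

theorem insertNth_id_eq_of_ne {i j : Fin (n + 1)} (hne : i ≠ j)
    (h : (p.insertNth q id : Fin (n + 1) → Fin n) i =
      (p.insertNth q id : Fin (n + 1) → Fin n) j) :
    (p.insertNth q id : Fin (n + 1) → Fin n) i = q := by
  induction i using Fin.succAboveCases p with
  | x => simp
  | p k =>
    induction j using Fin.succAboveCases p with
    | x => simpa using h
    | p l => simp_all

end Fin

theorem stmt_7_general {n s : ℕ} (A : Matrix (Fin (n + 1)) (Fin (n + 1)) ℝ)
    (hblock : ∀ i j : Fin (n + 1), s ≤ i.val ∨ s ≤ j.val → A i j = 1)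
    (w : Fin (n + 1) → ℝ)
    (p q : Fin (n + 1)) (hp : s ≤ p.val) (hq : s ≤ q.val) (hpq : p ≠ q)
    (heq : w p = w q) :
    Efficient A w ↔
      Efficient (A.submatrix p.succAbove p.succAbove) (w ∘ p.succAbove) := by
  obtain ⟨q', rfl⟩ := Fin.exists_succAbove_eq hpq.symm
  set σ : Fin (n + 1) → Fin n := p.insertNth q' id
  have hστ : Function.LeftInverse σ p.succAbove := fun k => by simp [σ]
  have hrow : (A ∘ p.succAbove) ∘ σ = A := Fin.comp_succAbove_comp_insertNth_id <|
    funext fun j => (hblock _ _ (.inl hp)).trans (hblock _ _ (.inl hq)).symm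
  have hcol : ∀ i, (A i ∘ p.succAbove) ∘ σ = A i := fun i =>
    Fin.comp_succAbove_comp_insertNth_id <| (hblock _ _ (.inr hp)).trans (hblock _ _ (.inr hq)).symm
  have hA : (A.submatrix p.succAbove p.succAbove).submatrix σ σ = A := by
    ext i j
    exact (congrFun (congrFun hrow i) _).trans (congrFun (hcol i) j)
  have hdiag : ∀ i j, i ≠ j → σ i = σ j →
      A.submatrix p.succAbove p.succAbove (σ i) (σ i) = 1 := fun i j hne hij => by
    rw [Matrix.submatrix_apply, show σ i = q' from Fin.insertNth_id_eq_of_ne hne hij]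
    exact hblock _ _ (.inl hq)
  conv_lhs => rw [← hA, ← Fin.comp_succAbove_comp_insertNth_id heq]
  exact ⟨Efficient.of_submatrix hστ, Efficient.submatrix hστ hdiag⟩

/-- If two of the last `n - s` entries of `w` coincide, say `w p = w q`, then
`w` is efficient for `A` iff `w(p)` is efficient for `A(p)`. -/
theorem stmt_7 {n s : ℕ} (hs : s ≤ n) (A : Matrix (Fin (n + 1)) (Fin (n + 1)) ℝ)
    (hA : Reciprocal A)
    (hblock : ∀ i j : Fin (n + 1), s ≤ i.val ∨ s ≤ j.val → A i j = 1)
    (w : Fin (n + 1) → ℝ) (hw : ∀ i, 0 < w i)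
    (p q : Fin (n + 1)) (hp : s ≤ p.val) (hq : s ≤ q.val) (hpq : p ≠ q)
    (heq : w p = w q) :
    Efficient A w ↔
      Efficient (A.submatrix p.succAbove p.succAbove) (w ∘ p.succAbove) :=
  stmt_7_general A hblock w p q hp hq hpq heq
end

section
/- Let A be the n-by-n reciprocal matrix of block form [[B, J],[J, J]] with B an s-by-s reciprocal matrix and n > s+1. Then any eigenvector of A associated with a nonzero eigenvalue has its last n-s entries all equal. -/
namespace Matrix

variable {m n R : Type*} [Fintype n] [NonUnitalNonAssocSemiring R]

theorem mulVec_apply_eq_of_row_eq (A : Matrix m n R) (v : n → R)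
    {p q : m} (h : A p = A q) : (A *ᵥ v) p = (A *ᵥ v) q :=
  congrArg (· ⬝ᵥ v) h

theorem eigenvector_apply_eq_of_row_eq [IsLeftCancelMulZero R] {A : Matrix n n R} {x : n → R}
    {μ : R} (hμ : μ ≠ 0) (heig : A *ᵥ x = μ • x) {p q : n} (h : A p = A q) :
    x p = x q := by
  have hrow := mulVec_apply_eq_of_row_eq A x h
  rw [heig, Pi.smul_apply, Pi.smul_apply, smul_eq_mul, smul_eq_mul] at hrow
  exact mul_left_cancel₀ hμ hrow

end Matrix

theorem stmt_10_general {n s : ℕ} (A : Matrix (Fin n) (Fin n) ℝ)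
    (hblock : ∀ i j : Fin n, s ≤ i.val ∨ s ≤ j.val → A i j = 1)
    (x : Fin n → ℝ) (μ : ℝ) (hμ : μ ≠ 0)
    (heig : A.mulVec x = μ • x) :
    ∀ p q : Fin n, s ≤ p.val → s ≤ q.val → x p = x q := by
  intro p q hp hq
  refine Matrix.eigenvector_apply_eq_of_row_eq hμ heig (funext fun j => ?_)
  rw [hblock p j (Or.inl hp), hblock q j (Or.inl hq)]

/-- Any eigenvector of a block perturbed consistent matrix associated with a
nonzero eigenvalue has its last `n - s` entries equal. -/
theorem stmt_10 {n s : ℕ} (hs : s + 1 < n) (A : Matrix (Fin n) (Fin n) ℝ)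
    (hA : Reciprocal A)
    (hblock : ∀ i j : Fin n, s ≤ i.val ∨ s ≤ j.val → A i j = 1)
    (x : Fin n → ℝ) (hx : x ≠ 0) (μ : ℝ) (hμ : μ ≠ 0)
    (heig : A.mulVec x = μ • x) :
    ∀ p q : Fin n, s ≤ p.val → s ≤ q.val → x p = x q :=
  stmt_10_general A hblock x μ hμ heig
end

section
/- Let A be the n-by-n reciprocal matrix of block form [[B, J],[J, J]] with B an s-by-s reciprocal matrix and n > s, and let w be the Perron eigenvector of A. Then w is efficient for A if and only if w[{1,...,s+1}] is efficient for A[{1,...,s+1}]. -/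
/-!
Collapsing all indices `≥ s` to the single index `s` is a retraction of `Fin n` onto
`Fin (s + 1)` along which both `A` and its Perron vector `w` factor (the tail entries of `w`
are equal because the corresponding rows of `A` are all ones). Efficiency is invariant under
such a retraction: a competitor on `Fin (s + 1)` pulls back to one on `Fin n`, and conversely a
competitor `v` on `Fin n` has `v i / v (e (p i))` forced to equal `1`, because the comparison
entry `A i (e (p i)) = 1 = w i / w (e (p i))` leaves no room for error.
-/

lemma Reciprocal.diag_eq_one {n : ℕ} {A : Matrix (Fin n) (Fin n) ℝ} (hA : Reciprocal A)
    (i : Fin n) : A i i = 1 := by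
  have h := hA.2 i i
  have hpos := hA.1 i i
  field_simp at h
  nlinarith

section Retraction

variable {m n : ℕ} {A : Matrix (Fin n) (Fin n) ℝ} {w : Fin n → ℝ}
  {e : Fin m → Fin n} {p : Fin n → Fin m}

lemma Efficient.submatrix_of_leftInverse (hpe : Function.LeftInverse p e)
    (hAf : ∀ i j, A (e (p i)) (e (p j)) = A i j) (hwf : ∀ i, w (e (p i)) = w i)
    (heff : Efficient A w) : Efficient (A.submatrix e e) (w ∘ e) := by
  refine ⟨fun a => heff.1 (e a), fun v hv hcmp a b => ?_⟩
  have hpull := heff.2 (v ∘ p) (fun i => hv (p i)) fun i j => by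
    simpa only [Matrix.submatrix_apply, Function.comp_apply, hAf, hwf] using hcmp (p i) (p j)
  simpa only [Function.comp_apply, hpe a, hpe b] using hpull (e a) (e b)

lemma apply_leftInverse_eq_of_abs_sub_le {v : Fin n → ℝ} (hv : ∀ i, 0 < v i) (hw : ∀ i, 0 < w i)
    (hpe : Function.LeftInverse p e) (hAf : ∀ i j, A (e (p i)) (e (p j)) = A i j)
    (hwf : ∀ i, w (e (p i)) = w i) (hdiag : ∀ i, A i i = 1)
    (hcmp : ∀ i j, |A i j - v i / v j| ≤ |A i j - w i / w j|) (i : Fin n) :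
    v (e (p i)) = v i := by
  have hA1 : A i (e (p i)) = 1 := by
    rw [← hAf, hpe (p i), hdiag]
  have h := hcmp i (e (p i))
  rw [hA1, hwf, div_self (hw i).ne', sub_self, abs_zero, abs_nonpos_iff, sub_eq_zero,
    eq_comm, div_eq_one_iff_eq (hv _).ne'] at h
  exact h.symm

lemma Efficient.of_submatrix_of_leftInverse (hw : ∀ i, 0 < w i)
    (hpe : Function.LeftInverse p e) (hAf : ∀ i j, A (e (p i)) (e (p j)) = A i j)
    (hwf : ∀ i, w (e (p i)) = w i) (hdiag : ∀ i, A i i = 1)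
    (heff : Efficient (A.submatrix e e) (w ∘ e)) : Efficient A w := by
  refine ⟨hw, fun v hv hcmp i j => ?_⟩
  have hvf := apply_leftInverse_eq_of_abs_sub_le hv hw hpe hAf hwf hdiag hcmp
  have hsub := heff.2 (v ∘ e) (fun a => hv (e a)) fun a b => hcmp (e a) (e b)
  simpa only [Function.comp_apply, hvf, hwf] using hsub (p i) (p j)

theorem efficient_iff_efficient_submatrix_of_leftInverse (hw : ∀ i, 0 < w i)
    (hpe : Function.LeftInverse p e) (hAf : ∀ i j, A (e (p i)) (e (p j)) = A i j)
    (hwf : ∀ i, w (e (p i)) = w i) (hdiag : ∀ i, A i i = 1) :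
    Efficient A w ↔ Efficient (A.submatrix e e) (w ∘ e) :=
  ⟨Efficient.submatrix_of_leftInverse hpe hAf hwf,
    Efficient.of_submatrix_of_leftInverse hw hpe hAf hwf hdiag⟩

end Retraction

section Collapse

variable {n s : ℕ} (hs : s < n)

lemma leftInverse_clamp_castLE :
    Function.LeftInverse (fun i : Fin n => Fin.clamp i s) (Fin.castLE hs) := fun a =>
  Fin.ext <| by simp [Fin.coe_clamp, Nat.le_of_lt_succ a.isLt]

lemma castLE_clamp_of_lt {i : Fin n} (hi : (i : ℕ) < s) :
    Fin.castLE hs (Fin.clamp i s) = i :=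
  Fin.ext <| by simp [Fin.coe_clamp, hi.le]

lemma castLE_clamp_of_le {i : Fin n} (hi : s ≤ (i : ℕ)) :
    Fin.castLE hs (Fin.clamp i s) = ⟨s, hs⟩ :=
  Fin.ext <| by simp [Fin.coe_clamp, hi]

lemma clamp_apply_eq_of_tail {α : Type*} {f : Fin n → α}
    (hf : ∀ i : Fin n, s ≤ (i : ℕ) → f i = f ⟨s, hs⟩) (i : Fin n) :
    f (Fin.castLE hs (Fin.clamp i s)) = f i := by
  rcases lt_or_ge (i : ℕ) s with hi | hi
  · rw [castLE_clamp_of_lt hs hi]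
  · rw [castLE_clamp_of_le hs hi, hf i hi]

lemma block_apply_castLE_clamp {A : Matrix (Fin n) (Fin n) ℝ}
    (hblock : ∀ i j : Fin n, s ≤ i.val ∨ s ≤ j.val → A i j = 1) (i j : Fin n) :
    A (Fin.castLE hs (Fin.clamp i s)) (Fin.castLE hs (Fin.clamp j s)) = A i j := by
  rcases lt_or_ge (i : ℕ) s with hi | hi
  · rcases lt_or_ge (j : ℕ) s with hj | hj
    · rw [castLE_clamp_of_lt hs hi, castLE_clamp_of_lt hs hj]
    · rw [castLE_clamp_of_le hs hj, hblock _ _ (Or.inr le_rfl), hblock i j (Or.inr hj)]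
  · rw [castLE_clamp_of_le hs hi, hblock _ _ (Or.inl le_rfl), hblock i j (Or.inl hi)]

end Collapse

lemma eq_of_row_eq_of_mulVec_eq_smul {ι : Type*} [Fintype ι] {A : Matrix ι ι ℝ} {w : ι → ℝ}
    {μ : ℝ} (hμ : μ ≠ 0) (heig : A.mulVec w = μ • w) {i j : ι} (hrow : A i = A j) :
    w i = w j := by
  have h := congrFun heig
  simp only [Matrix.mulVec, Pi.smul_apply, smul_eq_mul] at h
  exact mul_left_cancel₀ hμ (by rw [← h i, ← h j, hrow])

/-- The Perron eigenvector `w` of a block perturbed consistent matrix is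
efficient iff `w[{1,…,s+1}]` is efficient for `A[{1,…,s+1}]`. -/
theorem stmt_11 {n s : ℕ} (hs : s < n) (A : Matrix (Fin n) (Fin n) ℝ)
    (hA : Reciprocal A)
    (hblock : ∀ i j : Fin n, s ≤ i.val ∨ s ≤ j.val → A i j = 1)
    (w : Fin n → ℝ) (hw : ∀ i, 0 < w i) (μ : ℝ)
    (heig : A.mulVec w = μ • w) :
    Efficient A w ↔
      Efficient
        (A.submatrix (Fin.castLE hs : Fin (s + 1) → Fin n) (Fin.castLE hs))
        (w ∘ (Fin.castLE hs : Fin (s + 1) → Fin n)) := by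
  have hrow : ∀ i : Fin n, s ≤ (i : ℕ) → A i = 1 := fun i hi =>
    funext fun j => hblock i j (Or.inl hi)
  have hμ : μ ≠ 0 := by
    rintro rfl
    have h := congrFun heig ⟨s, hs⟩
    simp only [Matrix.mulVec, hrow ⟨s, hs⟩ le_rfl, zero_smul, Pi.zero_apply, one_dotProduct] at h
    exact (Finset.sum_pos (fun j _ => hw j) ⟨⟨s, hs⟩, Finset.mem_univ _⟩).ne' h
  have htail : ∀ i : Fin n, s ≤ (i : ℕ) → w i = w ⟨s, hs⟩ := fun i hi =>
    eq_of_row_eq_of_mulVec_eq_smul hμ heig ((hrow i hi).trans (hrow _ le_rfl).symm)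
  exact efficient_iff_efficient_submatrix_of_leftInverse hw (leftInverse_clamp_castLE hs)
    (block_apply_castLE_clamp hs hblock) (clamp_apply_eq_of_tail hs htail) hA.diag_eq_one
end

section
/- Let A be the n-by-n reciprocal matrix of block form [[B, J],[J, J]] with B a 3-by-3 reciprocal matrix and n >= 5. If w is efficient for A, then there exists i in {4,...,n} such that w(i) is efficient for A(i). -/
/-!
Efficiency of `w` means strong connectivity of the digraph `G(A, w)` with an edge `i → j`
whenever `A i j ≤ w i / w j`: scaling `w` up on a set closed under out-edges would improve it,
and conversely the indices maximizing `v / w` form such a closed set. By reciprocity any two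
vertices are joined in at least one direction, and at a clone index `c ≥ 3` the edges just compare
weights. Delete one of the two heaviest clones `a`, `b`. If both deletions disconnect the graph,
the two cuts produce vertices `s₀, t₁, s₁, t₀` outside the clones, and the weight comparisons
force `s₀, t₁, s₁` to be distinct and `t₀` to differ from `s₀, t₁`. As `B` is `3 × 3`, `t₀ = s₁`,
and then neither cut allows an edge between `t₁` and `t₀`.
-/

open Set Filter Topology

/-- The subgraph induced on `s` is strongly connected, phrased as: no nonempty proper subset of
`s` is closed under the edges inside `s`. -/
def StronglyConnectedOn {α : Type*} (r : α → α → Prop) (s : Set α) : Prop :=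
  ∀ S ⊆ s, S.Nonempty → (∀ x ∈ S, ∀ y ∈ s, r x y → y ∈ S) → s ⊆ S

namespace StronglyConnectedOn

variable {α β : Type*} {r : α → α → Prop}

theorem comap {s : Set α} (h : StronglyConnectedOn r s) {f : β → α} (hf : Function.Injective f)
    (hfs : range f = s) : StronglyConnectedOn (fun x y => r (f x) (f y)) univ := by
  intro S _ hSne hS b _
  subst hfs
  have := h (f '' S) (image_subset_range f S) (hSne.image f) (by
    rintro _ ⟨a, ha, rfl⟩ _ ⟨b, rfl⟩ hab
    exact mem_image_of_mem f (hS a ha b trivial hab)) (mem_range_self b)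
  exact hf.mem_set_image.1 this

theorem exists_cut_of_not_compl_singleton (h : StronglyConnectedOn r univ) {c : α}
    (hc : ¬ StronglyConnectedOn r {c}ᶜ) :
    ∃ S : Set α, c ∉ S ∧ (∀ x ∈ S, ∀ y ∉ S, y ≠ c → ¬ r x y) ∧
      (∃ s ∈ S, r s c) ∧ ∃ t ∉ S, t ≠ c ∧ r c t := by
  simp only [StronglyConnectedOn, not_forall, exists_prop] at hc
  obtain ⟨S, hSc, hSne, hS, hSt⟩ := hc
  have hcS : c ∉ S := fun hc => hSc hc rfl
  refine ⟨S, hcS, fun x hx y hy hyc hxy => hy (hS x hx y hyc hxy), ?_, ?_⟩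
  · by_contra! hin
    refine hcS (h S (subset_univ S) hSne (fun x hx y _ hxy => ?_) (mem_univ c))
    by_cases hyc : y = c
    · exact absurd (hyc ▸ hxy) (hin x hx)
    · exact hS x hx y hyc hxy
  · by_contra! hout
    refine hSt fun y hyc => ?_
    have := h (insert c S) (subset_univ _) (insert_nonempty c S) (fun x hx z _ hxz => ?_)
      (mem_univ y)
    · exact (mem_insert_iff.1 this).resolve_left hyc
    by_cases hzc : z = c
    · exact hzc ▸ mem_insert c S
    rcases hx with rfl | hx
    · exact by_contra fun hz => hout z (fun hzS => hz (mem_insert_of_mem _ hzS)) hzc hxz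
    · exact mem_insert_of_mem _ (hS x hx z hzc hxz)

end StronglyConnectedOn

theorem Set.eq_of_encard_le_three {α : Type*} {s : Set α} (hs : s.encard ≤ 3) {x y z t : α}
    (hx : x ∈ s) (hy : y ∈ s) (hz : z ∈ s) (ht : t ∈ s) (hxy : x ≠ y) (hxz : x ≠ z)
    (hyz : y ≠ z) (htx : t ≠ x) (hty : t ≠ y) : t = z := by
  by_contra htz
  have h4 : ({t, x, y, z} : Set α).encard = 4 := by
    rw [encard_insert_of_notMem (by simp [htx, hty, htz]),
      encard_insert_of_notMem (by simp [hxy, hxz]), encard_pair hyz]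
    rfl
  have := encard_le_encard (show ({t, x, y, z} : Set α) ⊆ s by simp [insert_subset_iff, *])
  rw [h4] at this
  exact absurd (this.trans hs) (by decide)

theorem Set.Finite.exists_top_two {α β : Type*} [LinearOrder β] {s : Set α} (hs : s.Finite)
    (hs2 : s.Nontrivial) (f : α → β) :
    ∃ a ∈ s, ∃ b ∈ s, a ≠ b ∧ (∀ c ∈ s, f c ≤ f b) ∧ ∀ c ∈ s, c ≠ b → f c ≤ f a := by
  obtain ⟨b, hb, hbmax⟩ := exists_max_image s f hs hs2.nonempty
  obtain ⟨a, ⟨has, hab⟩, hamax⟩ := exists_max_image (s \ {b}) f hs.sdiff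
    (let ⟨x, hx, hxb⟩ := hs2.exists_ne b; ⟨x, hx, hxb⟩)
  exact ⟨a, has, b, hb, hab, hbmax, fun c hc hcb => hamax c ⟨hc, hcb⟩⟩

theorem Fin.encard_setOf_val_lt_le (m k : ℕ) : {i : Fin m | i.val < k}.encard ≤ k := calc
  _ = (Fin.val '' {i : Fin m | i.val < k}).encard := (Fin.val_injective.encard_image _).symm
  _ ≤ (Iio k : Set ℕ).encard := encard_le_encard (by rintro _ ⟨i, hi, rfl⟩; exact hi)
  _ = k := by rw [← Finset.coe_range, encard_coe_eq_coe_finsetCard, Finset.card_range]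

theorem abs_sub_le_abs_sub_of_mem_uIcc {α : Type*} [AddCommGroup α] [LinearOrder α]
    [IsOrderedAddMonoid α] {a p q : α} (h : p ∈ uIcc a q) : |a - p| ≤ |a - q| := by
  rw [abs_sub_comm a, abs_sub_comm a]
  exact abs_sub_left_of_mem_uIcc h

section Clones

variable {α β : Type*} [LinearOrder β] {r : α → α → Prop} {w : α → β} {S : Set α} {c d x y : α}

/-- In `G(A, w)` this holds for an index whose row and column of `A` are all ones. -/
def IsClone (r : α → α → Prop) (w : α → β) (c : α) : Prop :=
  ∀ z, (r c z ↔ w z ≤ w c) ∧ (r z c ↔ w c ≤ w z)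

theorem IsClone.lt_of_mem_cut (hd : IsClone r w d) (hS : ∀ x ∈ S, ∀ y ∉ S, y ≠ c → ¬ r x y)
    (hdS : d ∈ S) (hy : y ∉ S) (hyc : y ≠ c) : w d < w y :=
  not_le.1 fun h => hS d hdS y hy hyc ((hd y).1.2 h)

theorem IsClone.lt_of_notMem_cut (hd : IsClone r w d) (hS : ∀ x ∈ S, ∀ y ∉ S, y ≠ c → ¬ r x y)
    (hdS : d ∉ S) (hdc : d ≠ c) (hx : x ∈ S) : w x < w d :=
  not_le.1 fun h => hS x hx d hdS hdc ((hd x).2.2 h)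

theorem stronglyConnectedOn_compl_singleton_of_top_two {C : Set α} (hr : ∀ x y, r x y ∨ r y x)
    (hC : ∀ c ∈ C, IsClone r w c) (hT : Cᶜ.encard ≤ 3) (hG : StronglyConnectedOn r univ)
    {a b : α} (ha : a ∈ C) (hb : b ∈ C) (hab : a ≠ b)
    (hbmax : ∀ c ∈ C, w c ≤ w b) (hamax : ∀ c ∈ C, c ≠ b → w c ≤ w a) :
    StronglyConnectedOn r {a}ᶜ ∨ StronglyConnectedOn r {b}ᶜ := by
  by_contra! ⟨hna, hnb⟩
  obtain ⟨S, hbS, hS, ⟨s₀, hs₀, hs₀b⟩, t₀, ht₀, ht₀b, hbt₀⟩ :=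
    hG.exists_cut_of_not_compl_singleton hnb
  obtain ⟨S', haS', hS', ⟨s₁, hs₁, hs₁a⟩, t₁, ht₁, ht₁a, hat₁⟩ :=
    hG.exists_cut_of_not_compl_singleton hna
  replace hs₀b : w b ≤ w s₀ := (hC b hb s₀).2.1 hs₀b
  replace hbt₀ : w t₀ ≤ w b := (hC b hb t₀).1.1 hbt₀
  replace hs₁a : w a ≤ w s₁ := (hC a ha s₁).2.1 hs₁a
  replace hat₁ : w t₁ ≤ w a := (hC a ha t₁).1.1 hat₁
  have haS : a ∈ S := by_contra fun h =>
    ((hC a ha).lt_of_notMem_cut hS h hab hs₀).not_ge ((hbmax a ha).trans hs₀b)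
  have hbS' : b ∉ S' := fun h =>
    ((hC b hb).lt_of_mem_cut hS' h ht₁ ht₁a).not_ge (hat₁.trans (hbmax a ha))
  have hs₁b : w s₁ < w b := (hC b hb).lt_of_notMem_cut hS' hbS' hab.symm hs₁
  have hwab : w a < w b := hs₁a.trans_lt hs₁b
  have hat₀ : w a < w t₀ := (hC a ha).lt_of_mem_cut hS haS ht₀ ht₀b
  have hs₀C : s₀ ∉ C := fun h =>
    (hamax s₀ h (ne_of_mem_of_not_mem hs₀ hbS)).not_gt (hwab.trans_le hs₀b)
  have ht₀C : t₀ ∉ C := fun h => (hamax t₀ h ht₀b).not_gt hat₀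
  have hs₁C : s₁ ∉ C := fun h =>
    ((hC s₁ h).lt_of_mem_cut hS' hs₁ ht₁ ht₁a).not_ge (hat₁.trans hs₁a)
  have ht₁C : t₁ ∉ C := fun h =>
    ((hC t₁ h).lt_of_notMem_cut hS' ht₁ ht₁a hs₁).not_ge (hat₁.trans hs₁a)
  have ht₁S : t₁ ∈ S := by_contra fun h =>
    ((hC a ha).lt_of_mem_cut hS haS h (ne_of_mem_of_not_mem hb ht₁C).symm).not_ge hat₁
  have ht₀s₁ : t₀ = s₁ := eq_of_encard_le_three hT hs₀C ht₁C hs₁C ht₀C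
    (ne_of_apply_ne w (hat₁.trans_lt (hwab.trans_le hs₀b)).ne')
    (ne_of_apply_ne w (hs₁b.trans_le hs₀b).ne') (ne_of_mem_of_not_mem hs₁ ht₁).symm
    (ne_of_mem_of_not_mem hs₀ ht₀).symm (ne_of_apply_ne w (hat₁.trans_lt hat₀).ne')
  rcases hr t₁ t₀ with h | h
  · exact hS t₁ ht₁S t₀ ht₀ ht₀b h
  · exact hS' s₁ hs₁ t₁ ht₁ ht₁a (ht₀s₁ ▸ h)

end Clones

section Efficiency

variable {n : ℕ} {A : Matrix (Fin n) (Fin n) ℝ} {w : Fin n → ℝ}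

def RatioAdj (A : Matrix (Fin n) (Fin n) ℝ) (w : Fin n → ℝ) (i j : Fin n) : Prop :=
  A i j ≤ w i / w j

theorem ratioAdj_total (hA : Reciprocal A) (hw : ∀ i, 0 < w i) (i j : Fin n) :
    RatioAdj A w i j ∨ RatioAdj A w j i := by
  refine (le_total (A i j) (w i / w j)).imp id fun h => ?_
  rw [RatioAdj, hA.2 i j, ← inv_div]
  exact inv_anti₀ (div_pos (hw i) (hw j)) h

theorem isClone_ratioAdj (hw : ∀ i, 0 < w i) {c : Fin n} (hrow : ∀ z, A c z = 1)
    (hcol : ∀ z, A z c = 1) : IsClone (RatioAdj A w) w c := fun z => by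
  rw [RatioAdj, RatioAdj, hrow, hcol, one_le_div (hw z), one_le_div (hw c)]
  exact ⟨Iff.rfl, Iff.rfl⟩

theorem efficient_of_stronglyConnectedOn (hw : ∀ i, 0 < w i)
    (h : StronglyConnectedOn (RatioAdj A w) univ) : Efficient A w := by
  refine ⟨hw, fun v hv hdom i j => ?_⟩
  have hmono : ∀ x y, RatioAdj A w x y → v x / w x ≤ v y / w y := by
    intro x y hxy
    have : v x / v y - A x y ≤ w x / w y - A x y := calc
      v x / v y - A x y ≤ |A x y - v x / v y| := by rw [abs_sub_comm]; exact le_abs_self _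
      _ ≤ |A x y - w x / w y| := hdom x y
      _ = w x / w y - A x y := by rw [abs_sub_comm, abs_of_nonneg (sub_nonneg.2 hxy)]
    rw [div_le_div_iff₀ (hw x) (hw y)]
    rw [sub_le_sub_iff_right, div_le_div_iff₀ (hv y) (hw y)] at this
    linarith
  obtain ⟨m, -, hm⟩ := exists_max_image univ (fun x => v x / w x) finite_univ ⟨i, trivial⟩
  have hall := h {x | v m / w m ≤ v x / w x} (subset_univ _) ⟨m, le_refl (v m / w m)⟩
    fun x hx y _ hxy => le_trans hx (hmono x y hxy)
  have hratio : ∀ x, v x / w x = v m / w m := fun x => le_antisymm (hm x trivial) (hall trivial)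
  have hij := (hratio i).trans (hratio j).symm
  rw [div_eq_div_iff (hw i).ne' (hw j).ne'] at hij
  rw [div_eq_div_iff (hv j).ne' (hw j).ne']
  linarith

theorem Efficient.stronglyConnectedOn (hA : Reciprocal A) (hw : Efficient A w) :
    StronglyConnectedOn (RatioAdj A w) univ := by
  classical
  intro S _ ⟨u, hu⟩ hS
  by_contra hSu
  obtain ⟨x, -, hx⟩ := not_subset.1 hSu
  have hcut : ∀ i ∈ S, ∀ j ∉ S, w i / w j < A i j := fun i hi j hj =>
    lt_of_not_ge fun h => hj (hS i hi j trivial h)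
  -- Scaling `w` up on `S` by a factor `c > 1` close to `1` moves every ratio towards `A`.
  obtain ⟨c, hc, hc1⟩ : ∃ c : ℝ, (∀ i j, i ∈ S → j ∉ S → c * (w i / w j) < A i j) ∧ 1 < c := by
    refine (Eventually.and ?_ self_mem_nhdsWithin).exists (f := 𝓝[>] (1 : ℝ))
    refine eventually_all.2 fun i => eventually_all.2 fun j => ?_
    by_cases hij : i ∈ S ∧ j ∉ S
    · have hlim : Tendsto (fun c : ℝ => c * (w i / w j)) (𝓝[>] 1) (𝓝 (1 * (w i / w j))) :=
        (tendsto_id.mul_const _).mono_left nhdsWithin_le_nhds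
      rw [one_mul] at hlim
      exact (hlim.eventually_lt_const (hcut i hij.1 j hij.2)).mono fun c hc _ _ => hc
    · exact Eventually.of_forall fun c hi hj => absurd ⟨hi, hj⟩ hij
  have hc0 : 0 < c := one_pos.trans hc1
  set v : Fin n → ℝ := fun z => if z ∈ S then c * w z else w z with hv
  have hvpos : ∀ z, 0 < v z := fun z => by
    by_cases hz : z ∈ S <;> simp only [hv, hz, if_true, if_false]
    exacts [mul_pos hc0 (hw.1 z), hw.1 z]
  have hdom : ∀ i j, |A i j - v i / v j| ≤ |A i j - w i / w j| := by
    intro i j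
    have hq := div_pos (hw.1 i) (hw.1 j)
    by_cases hi : i ∈ S <;> by_cases hj : j ∈ S <;> simp only [hv, hi, hj, if_true, if_false]
    · rw [mul_div_mul_left _ _ hc0.ne']
    · rw [mul_div_assoc]
      exact abs_sub_le_abs_sub_of_mem_uIcc <| mem_uIcc.2 <| Or.inr
        ⟨le_mul_of_one_le_left hq.le hc1.le, (hc i j hi hj).le⟩
    · have hA' : A i j < w i / w j / c := calc
        A i j = (A j i)⁻¹ := hA.2 j i
        _ < (c * (w j / w i))⁻¹ :=
          inv_strictAnti₀ (mul_pos hc0 (div_pos (hw.1 j) (hw.1 i))) (hc j i hj hi)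
        _ = w i / w j / c := by rw [mul_inv, inv_div, div_eq_inv_mul _ c]
      rw [div_mul_eq_div_div_swap]
      exact abs_sub_le_abs_sub_of_mem_uIcc <| mem_uIcc.2 <| Or.inl
        ⟨hA'.le, div_le_self hq.le hc1.le⟩
    · exact le_rfl
  have hux := hw.2 v hvpos hdom u x
  simp only [hv, hu, hx, if_true, if_false, mul_div_assoc] at hux
  exact hc1.ne' ((mul_eq_right₀ (div_pos (hw.1 u) (hw.1 x)).ne').1 hux)

theorem efficient_submatrix_succAbove {m : ℕ} {A : Matrix (Fin (m + 1)) (Fin (m + 1)) ℝ}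
    {w : Fin (m + 1) → ℝ} (hw : ∀ i, 0 < w i) {i : Fin (m + 1)}
    (h : StronglyConnectedOn (RatioAdj A w) {i}ᶜ) :
    Efficient (A.submatrix i.succAbove i.succAbove) (w ∘ i.succAbove) :=
  efficient_of_stronglyConnectedOn (fun _ => hw _)
    (h.comap Fin.succAbove_right_injective (Fin.range_succAbove i))

end Efficiency

/-- For a 3-block perturbed consistent matrix with `n ≥ 5`, every efficient
vector remains efficient after deleting some index `i ∈ {4,…,n}`. -/
theorem stmt_12 {n : ℕ} (hn : 5 ≤ n + 1) (A : Matrix (Fin (n + 1)) (Fin (n + 1)) ℝ)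
    (hA : Reciprocal A)
    (hblock : ∀ i j : Fin (n + 1), 3 ≤ i.val ∨ 3 ≤ j.val → A i j = 1)
    (w : Fin (n + 1) → ℝ) (hw : Efficient A w) :
    ∃ i : Fin (n + 1), 3 ≤ i.val ∧
      Efficient (A.submatrix i.succAbove i.succAbove) (w ∘ i.succAbove) := by
  set C : Set (Fin (n + 1)) := {i | 3 ≤ i.val}
  have hC : ∀ c ∈ C, IsClone (RatioAdj A w) w c := fun c hc =>
    isClone_ratioAdj hw.1 (fun z => hblock c z (Or.inl hc)) (fun z => hblock z c (Or.inr hc))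
  have hT : Cᶜ.encard ≤ 3 := by
    simpa only [C, compl_ofPred, not_le, Nat.cast_ofNat] using Fin.encard_setOf_val_lt_le (n + 1) 3
  have hC2 : C.Nontrivial := ⟨⟨3, by omega⟩, by simp [C], ⟨4, by omega⟩, by simp [C], by simp⟩
  obtain ⟨a, ha, b, hb, hab, hbmax, hamax⟩ := C.toFinite.exists_top_two hC2 w
  rcases stronglyConnectedOn_compl_singleton_of_top_two (ratioAdj_total hA hw.1) hC hT
    (hw.stronglyConnectedOn hA) ha hb hab hbmax hamax with h | h
  · exact ⟨a, ha, efficient_submatrix_succAbove hw.1 h⟩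
  · exact ⟨b, hb, efficient_submatrix_succAbove hw.1 h⟩
end

section
/- Let A be the n-by-n reciprocal matrix of block form [[B, J],[J, J]] with B a 3-by-3 reciprocal matrix and n >= 4. Then a positive vector v is efficient for A if and only if v = (I_3 ⊕ P) w for some (n-3)-by-(n-3) permutation matrix P and some vector w efficient for A with w[{1,2,3,4}] efficient for A[{1,2,3,4}]. -/
/-!
By Blanquero, Carrizosa and Conde, a positive `v` is efficient for `A` iff the digraph
`G(A, v)` with an arc `a → b` whenever `v a / v b ≥ A a b` is strongly connected. All entries
of `A` touching a tail index `t ≥ 3` are `1`, so paths through the tail descend in `v`.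

The head digraph on `{0, 1, 2}` is semicomplete, so it has a root (reaching every head vertex)
and a coroot (reached from every head vertex). Strong connectivity of `G(A, v)` forces a tail
vertex whose value lies between a value on the roots and a value off them, and one whose value
lies between a value off the coroots and a value on them. At most one head vertex is neither a
root nor a coroot, so one of these tail vertices `t` satisfies `v x ≤ v t ≤ v y` for a root `x`
and a coroot `y`. Then `{0, 1, 2, t}` spans a strongly connected digraph, and swapping `t` with
`3` gives `w`. Conversely, permuting the tail indices leaves `A` unchanged.
-/

open Relation Filter Topology

namespace Relation.ReflTransGen

variable {α : Type*} {r : α → α → Prop} {S : Set α} {a b : α}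

theorem mem_of_backward_closed (hS : ∀ a b, r a b → b ∈ S → a ∈ S)
    (h : ReflTransGen r a b) (hb : b ∈ S) : a ∈ S := by
  induction h using head_induction_on with
  | refl => exact hb
  | head hac _ ih => exact hS _ _ hac ih

theorem mem_of_forward_closed (hS : ∀ a b, r a b → a ∈ S → b ∈ S)
    (h : ReflTransGen r a b) (ha : a ∈ S) : b ∈ S := by
  induction h with
  | refl => exact ha
  | tail _ hbc ih => exact hS _ _ hbc ih

end Relation.ReflTransGen

/-- A vertex reaching the most vertices reaches all: an unreached vertex has an arc into it and
would reach strictly more. -/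
theorem exists_forall_reflTransGen_of_total {α : Type*} [Fintype α] [Nonempty α]
    {r : α → α → Prop} (htot : ∀ a b, r a b ∨ r b a) : ∃ x, ∀ y, ReflTransGen r x y := by
  classical
  let reach : α → Finset α := fun x => Finset.univ.filter (ReflTransGen r x)
  obtain ⟨x, -, hmax⟩ := Finset.exists_max_image Finset.univ (fun x => (reach x).card)
    Finset.univ_nonempty
  refine ⟨x, fun y => by_contra fun hxy => ?_⟩
  have hyx : r y x := (htot x y).resolve_left fun h => hxy (.single h)
  have hlt : reach x ⊂ reach y := by
    refine Finset.ssubset_iff_of_subset (fun z hz => ?_) |>.mpr ⟨y, ?_, ?_⟩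
    · simp only [reach, Finset.mem_filter, Finset.mem_univ, true_and] at hz ⊢
      exact .head hyx hz
    · simpa [reach] using ReflTransGen.refl
    · simpa [reach] using hxy
  exact (Finset.card_lt_card hlt).not_ge (hmax y (Finset.mem_univ y))

theorem exists_forall_reflTransGen_to_of_total {α : Type*} [Fintype α] [Nonempty α]
    {r : α → α → Prop} (htot : ∀ a b, r a b ∨ r b a) : ∃ y, ∀ x, ReflTransGen r x y := by
  obtain ⟨y, hy⟩ := exists_forall_reflTransGen_of_total (r := Function.swap r) fun a b => htot b a
  exact ⟨y, fun x => reflTransGen_swap.mp (hy x)⟩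

theorem exists_one_lt_forall_mul_lt_s14 {ι : Type*} [Finite ι] {p : ι → Prop} {x y : ι → ℝ}
    (h : ∀ i, p i → x i < y i) : ∃ s, 1 < s ∧ ∀ i, p i → s * x i < y i := by
  have hev : ∀ᶠ s in 𝓝 (1 : ℝ), ∀ i, p i → s * x i < y i := eventually_all.2 fun i => by
    by_cases hi : p i
    · have hlim : Tendsto (fun s : ℝ => s * x i) (𝓝 1) (𝓝 (x i)) := by
        simpa using (continuous_mul_const (x i)).tendsto 1
      exact (hlim.eventually_lt_const (h i hi)).mono fun s hs _ => hs
    · exact .of_forall fun _ h' => absurd h' hi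
  obtain ⟨s, hs, hs1⟩ := ((hev.filter_mono nhdsWithin_le_nhds).and self_mem_nhdsWithin).exists
    (f := 𝓝[>] (1 : ℝ))
  exact ⟨s, hs1, hs⟩

def Arc {m : ℕ} (A : Matrix (Fin m) (Fin m) ℝ) (v : Fin m → ℝ) (a b : Fin m) : Prop :=
  A a b * v b ≤ v a

section Efficiency

variable {m : ℕ} {A : Matrix (Fin m) (Fin m) ℝ} {v : Fin m → ℝ}

theorem Reciprocal.arc_or_arc (hA : Reciprocal A) (a b : Fin m) :
    Arc A v a b ∨ Arc A v b a := by
  refine (le_or_gt (A a b * v b) (v a)).imp id fun h => ?_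
  rw [Arc, hA.2 a b, inv_mul_le_iff₀ (hA.1 a b)]
  exact h.le

theorem div_le_div_of_arc {v' : Fin m → ℝ} (hv : ∀ i, 0 < v i) (hv' : ∀ i, 0 < v' i) {a c : Fin m}
    (hdom : |A a c - v' a / v' c| ≤ |A a c - v a / v c|) (harc : Arc A v a c) :
    v' a / v a ≤ v' c / v c := by
  have hA : A a c ≤ v a / v c := (le_div_iff₀ (hv c)).2 harc
  have hle : v' a / v' c ≤ v a / v c := by
    by_contra! hlt
    rw [abs_of_neg (show A a c - v' a / v' c < 0 by linarith),
      abs_of_nonpos (show A a c - v a / v c ≤ 0 by linarith)] at hdom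
    linarith
  rw [div_le_div_iff₀ (hv' c) (hv c)] at hle
  rw [div_le_div_iff₀ (hv a) (hv c)]
  linarith

theorem efficient_of_forall_reflTransGen_s14 (hv : ∀ i, 0 < v i)
    (hSC : ∀ a b, ReflTransGen (Arc A v) a b) : Efficient A v := by
  refine ⟨hv, fun v' hv' hdom i j => ?_⟩
  have hq : ∀ a b, v' a / v a ≤ v' b / v b := fun a b => by
    have h := (hSC a b).lift (p := fun x y : ℝ => x ≤ y) (fun c => v' c / v c)
      fun _ _ => div_le_div_of_arc hv hv' (hdom _ _)
    rwa [reflTransGen_eq_self] at h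
  have hij : v' i / v i = v' j / v j := le_antisymm (hq i j) (hq j i)
  rw [div_eq_div_iff (hv i).ne' (hv j).ne'] at hij
  rw [div_eq_div_iff (hv' j).ne' (hv j).ne']
  linarith

theorem abs_sub_div_le_of_scale (hA : Reciprocal A) (hv : ∀ i, 0 < v i) {S : Set (Fin m)}
    [DecidablePred (· ∈ S)] {s : ℝ} (hs1 : 1 ≤ s)
    (hs : ∀ c d, c ∉ S ∧ d ∈ S → s * v c < A c d * v d) (i j : Fin m) :
    let v' : Fin m → ℝ := fun c => if c ∈ S then v c else s * v c
    |A i j - v' i / v' j| ≤ |A i j - v i / v j| := by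
  refine Set.abs_sub_right_of_mem_uIcc ?_
  by_cases hi : i ∈ S <;> by_cases hj : j ∈ S <;> simp only [hi, hj, if_true, if_false]
  · exact Set.left_mem_uIcc
  · have h := hs j i ⟨hj, hi⟩
    rw [hA.2 i j, inv_mul_eq_div, lt_div_iff₀ (hA.1 i j)] at h
    refine Set.mem_uIcc.2 (.inr ⟨?_, ?_⟩)
    · rw [le_div_iff₀ (by nlinarith [hv j])]; nlinarith
    · exact div_le_div_of_nonneg_left (hv i).le (hv j) (by nlinarith [hv j])
  · have h := hs i j ⟨hi, hj⟩
    refine Set.mem_uIcc.2 (.inl ⟨?_, ?_⟩)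
    · rw [mul_div_assoc]; exact le_mul_of_one_le_left (div_pos (hv i) (hv j)).le hs1
    · rw [div_le_iff₀ (hv j)]; exact h.le
  · rw [mul_div_mul_left _ _ (by linarith)]; exact Set.left_mem_uIcc

/-- If `b` is unreachable from `a`, multiplying `v` outside the set of vertices reaching `b` by a
factor slightly above `1` moves every ratio `v i / v j` towards `A i j`. -/
theorem Efficient.forall_reflTransGen (hA : Reciprocal A) (heff : Efficient A v) :
    ∀ a b, ReflTransGen (Arc A v) a b := by
  classical
  have hv := heff.1
  intro a b
  by_contra hab
  set S : Set (Fin m) := {c | ReflTransGen (Arc A v) c b}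
  obtain ⟨s, hs1, hs⟩ := exists_one_lt_forall_mul_lt_s14 (p := fun cd : Fin m × Fin m =>
    cd.1 ∉ S ∧ cd.2 ∈ S) (x := fun cd => v cd.1) (y := fun cd => A cd.1 cd.2 * v cd.2)
    fun cd hcd => not_le.mp fun h => hcd.1 (.head h hcd.2)
  have hv' : ∀ i, 0 < (fun c => if c ∈ S then v c else s * v c) i := fun i => by
    by_cases hi : i ∈ S <;> simp only [hi, if_true, if_false] <;> nlinarith [hv i]
  have h := heff.2 _ hv' (abs_sub_div_le_of_scale hA hv hs1.le fun c d => hs (c, d)) a b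
  simp only [show a ∉ S from hab, show b ∈ S from .refl, if_true, if_false, mul_div_assoc] at h
  nlinarith [div_pos (hv a) (hv b)]

theorem Efficient.comp_perm (heff : Efficient A v) (σ : Equiv.Perm (Fin m))
    (hσ : ∀ i j, A (σ i) (σ j) = A i j) : Efficient A (v ∘ σ) := by
  refine ⟨fun i => heff.1 _, fun v' hv' hdom i j => ?_⟩
  have hdom' : ∀ i j, |A i j - (v' ∘ σ.symm) i / (v' ∘ σ.symm) j| ≤ |A i j - v i / v j| := by
    intro i j
    have h := hdom (σ.symm i) (σ.symm j)
    rwa [← hσ, Function.comp_apply, Function.comp_apply, σ.apply_symm_apply,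
      σ.apply_symm_apply] at h
  simpa using heff.2 (v' ∘ σ.symm) (fun i => hv' _) hdom' (σ i) (σ j)

end Efficiency

theorem Fin.eq_of_ne_of_ne_of_three {a b c d : Fin 3} :
    a ≠ b → c ≠ a → c ≠ b → d ≠ a → d ≠ b → c = d := by
  revert a b c d; decide

section Block

variable {n k : ℕ} {A : Matrix (Fin n) (Fin n) ℝ} {v : Fin n → ℝ}

theorem apply_perm_eq_of_block (hblock : ∀ i j : Fin n, k ≤ i.val ∨ k ≤ j.val → A i j = 1)
    {σ : Equiv.Perm (Fin n)} (hfix : ∀ i : Fin n, i.val < k → σ i = i) (i j : Fin n) :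
    A (σ i) (σ j) = A i j := by
  have htail : ∀ i : Fin n, k ≤ i.val → k ≤ (σ i).val := fun i hi => by
    by_contra! h
    have := σ.injective (hfix _ h)
    omega
  by_cases hi : k ≤ i.val
  · rw [hblock _ _ (.inl (htail i hi)), hblock _ _ (.inl hi)]
  by_cases hj : k ≤ j.val
  · rw [hblock _ _ (.inr (htail j hj)), hblock _ _ (.inr hj)]
  rw [hfix i (by omega), hfix j (by omega)]

theorem exists_head_ge (hblock : ∀ i j : Fin n, k ≤ i.val ∨ k ≤ j.val → A i j = 1)
    (hSC : ∀ a b, ReflTransGen (Arc A v) a b) (hk : 0 < k) (hkn : k ≤ n) (t : Fin n) :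
    ∃ i : Fin k, v t ≤ v (Fin.castLE hkn i) := by
  by_contra! h
  have hS : ∀ a b, Arc A v a b → b ∈ {s | v t ≤ v s} → a ∈ {s | v t ≤ v s} := by
    intro a b hab hb
    have hbk : k ≤ b.val := by
      by_contra! hbk
      exact (h ⟨b, hbk⟩).not_ge hb
    rw [Arc, hblock a b (.inr hbk), one_mul] at hab
    exact le_trans hb hab
  have h0 : Fin.castLE hkn ⟨0, hk⟩ ∈ {s | v t ≤ v s} :=
    (hSC _ t).mem_of_backward_closed hS (le_refl (v t))
  exact (h ⟨0, hk⟩).not_ge h0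

theorem exists_head_le (hblock : ∀ i j : Fin n, k ≤ i.val ∨ k ≤ j.val → A i j = 1)
    (hSC : ∀ a b, ReflTransGen (Arc A v) a b) (hk : 0 < k) (hkn : k ≤ n) (t : Fin n) :
    ∃ i : Fin k, v (Fin.castLE hkn i) ≤ v t := by
  by_contra! h
  have hS : ∀ a b, Arc A v a b → a ∈ {s | v s ≤ v t} → b ∈ {s | v s ≤ v t} := by
    intro a b hab ha
    have hak : k ≤ a.val := by
      by_contra! hak
      exact (h ⟨a, hak⟩).not_ge ha
    rw [Arc, hblock a b (.inl hak), one_mul] at hab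
    exact le_trans hab ha
  have h0 : Fin.castLE hkn ⟨0, hk⟩ ∈ {s | v s ≤ v t} :=
    (hSC t _).mem_of_forward_closed hS (le_refl (v t))
  exact (h ⟨0, hk⟩).not_ge h0

/-- Otherwise `S` together with the tail vertices lying above some value on `S` would be a
proper set of vertices without incoming arcs. -/
theorem exists_tail_bridge (hblock : ∀ i j : Fin n, k ≤ i.val ∨ k ≤ j.val → A i j = 1)
    (hSC : ∀ a b, ReflTransGen (Arc A v) a b) (hkn : k ≤ n) {S : Set (Fin k)}
    (hS : ∀ i j, Arc (A.submatrix (Fin.castLE hkn) (Fin.castLE hkn)) (v ∘ Fin.castLE hkn) i j →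
      j ∈ S → i ∈ S)
    (hne : S.Nonempty) (hproper : ∃ i, i ∉ S) :
    ∃ t : Fin n, k ≤ t.val ∧ ∃ j ∈ S, ∃ i ∉ S,
      v (Fin.castLE hkn j) ≤ v t ∧ v t ≤ v (Fin.castLE hkn i) := by
  by_contra! hno
  let X : Set (Fin n) := {a | (∃ i ∈ S, Fin.castLE hkn i = a) ∨
    (k ≤ a.val ∧ ∃ j ∈ S, v (Fin.castLE hkn j) ≤ v a)}
  have hlower : ∀ a ∈ X, ∃ j ∈ S, v (Fin.castLE hkn j) ≤ v a := by
    rintro a (⟨i, hi, rfl⟩ | ⟨-, hj⟩)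
    exacts [⟨i, hi, le_rfl⟩, hj]
  have hX : ∀ c a, Arc A v c a → a ∈ X → c ∈ X := by
    intro c a hca ha
    by_cases hc : k ≤ c.val
    · rw [Arc, hblock c a (.inl hc), one_mul] at hca
      obtain ⟨j, hj, hja⟩ := hlower a ha
      exact .inr ⟨hc, j, hj, hja.trans hca⟩
    let i : Fin k := ⟨c.val, by omega⟩
    by_cases hi : i ∈ S
    · exact .inl ⟨i, hi, rfl⟩
    exfalso
    rcases ha with ⟨j, hj, rfl⟩ | ⟨ha, j, hj, hja⟩
    · exact hi (hS i j hca hj)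
    · rw [Arc, hblock c a (.inr ha), one_mul] at hca
      exact (hno _ ha j hj i hi hja).not_ge hca
  obtain ⟨j, hj⟩ := hne
  obtain ⟨i, hi⟩ := hproper
  rcases (hSC _ _).mem_of_backward_closed hX (.inl ⟨j, hj, rfl⟩) with ⟨i', hi', hii'⟩ | ⟨hik, -⟩
  · obtain rfl := Fin.castLE_injective hkn hii'
    exact hi hi'
  · exact absurd hik (by simp)

end Block

/-- Every vertex reaches `last` through `y`, and `last` reaches every vertex through `x`. -/
theorem forall_reflTransGen_of_hub {k : ℕ} {C : Matrix (Fin (k + 1)) (Fin (k + 1)) ℝ}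
    {w : Fin (k + 1) → ℝ} (hlast : ∀ i, C (Fin.last k) i = 1 ∧ C i (Fin.last k) = 1)
    {x y : Fin k}
    (hx : ∀ j, ReflTransGen (Arc (C.submatrix Fin.castSucc Fin.castSucc) (w ∘ Fin.castSucc)) x j)
    (hy : ∀ i, ReflTransGen (Arc (C.submatrix Fin.castSucc Fin.castSucc) (w ∘ Fin.castSucc)) i y)
    (hxw : w x.castSucc ≤ w (Fin.last k)) (hyw : w (Fin.last k) ≤ w y.castSucc) :
    ∀ a b, ReflTransGen (Arc C w) a b := by
  have hlift : ∀ {i j : Fin k},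
      ReflTransGen (Arc (C.submatrix Fin.castSucc Fin.castSucc) (w ∘ Fin.castSucc)) i j →
      ReflTransGen (Arc C w) i.castSucc j.castSucc := fun h => h.lift Fin.castSucc fun _ _ => id
  have hto : ∀ a, ReflTransGen (Arc C w) a (Fin.last k) := Fin.lastCases .refl fun i =>
    (hlift (hy i)).tail (by rw [Arc, (hlast y.castSucc).2, one_mul]; exact hyw)
  have hfrom : ∀ b, ReflTransGen (Arc C w) (Fin.last k) b := Fin.lastCases .refl fun j =>
    .head (by rw [Arc, (hlast x.castSucc).1, one_mul]; exact hxw) (hlift (hx j))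
  exact fun a b => (hto a).trans (hfrom b)

theorem exists_tail_between_root_coroot {n : ℕ} (hn : 3 < n) {A : Matrix (Fin n) (Fin n) ℝ}
    {v : Fin n → ℝ} (hA : Reciprocal A)
    (hblock : ∀ i j : Fin n, 3 ≤ i.val ∨ 3 ≤ j.val → A i j = 1)
    (hSC : ∀ a b, ReflTransGen (Arc A v) a b) :
    ∃ t : Fin n, 3 ≤ t.val ∧ ∃ x y : Fin 3,
      let R := Arc (A.submatrix (Fin.castLE hn.le) (Fin.castLE hn.le)) (v ∘ Fin.castLE hn.le)
      (∀ j, ReflTransGen R x j) ∧ (∀ i, ReflTransGen R i y) ∧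
      v (Fin.castLE hn.le x) ≤ v t ∧ v t ≤ v (Fin.castLE hn.le y) := by
  set R := Arc (A.submatrix (Fin.castLE hn.le) (Fin.castLE hn.le)) (v ∘ Fin.castLE hn.le)
  have htot : ∀ a b, R a b ∨ R b a := fun a b => hA.arc_or_arc _ _
  by_cases hstrong : ∀ x y, ReflTransGen R x y
  · obtain ⟨x, hx⟩ := exists_head_le hblock hSC (by norm_num) hn.le ⟨3, hn⟩
    obtain ⟨y, hy⟩ := exists_head_ge hblock hSC (by norm_num) hn.le ⟨3, hn⟩
    exact ⟨⟨3, hn⟩, le_rfl, x, y, hstrong x, (hstrong · y), hx, hy⟩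
  obtain ⟨a, b, hab⟩ : ∃ a b, ¬ReflTransGen R a b := by simpa using hstrong
  obtain ⟨s, hs⟩ := exists_forall_reflTransGen_of_total htot
  obtain ⟨s', hs'⟩ := exists_forall_reflTransGen_to_of_total htot
  let roots : Set (Fin 3) := {x | ∀ y, ReflTransGen R x y}
  let coroots : Set (Fin 3) := {y | ∀ x, ReflTransGen R x y}
  obtain ⟨t₁, ht₁, j₁, hj₁, i₁, hi₁, hjt₁, hti₁⟩ := exists_tail_bridge hblock hSC hn.le
    (S := roots) (fun i j hij hj y => .head hij (hj y)) ⟨s, hs⟩ ⟨a, fun ha => hab (ha b)⟩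
  obtain ⟨t₂, ht₂, j₂, hj₂, i₂, hi₂, hjt₂, hti₂⟩ := exists_tail_bridge hblock hSC hn.le
    (S := corootsᶜ) (fun i j hij hj hi => hj fun x => (hi x).tail hij) ⟨b, fun hb => hab (hb a)⟩
    ⟨s', not_not.2 hs'⟩
  rw [Set.notMem_compl_iff] at hi₂
  by_cases h₁ : i₁ ∈ coroots
  · exact ⟨t₁, ht₁, j₁, i₁, hj₁, h₁, hjt₁, hti₁⟩
  by_cases h₂ : j₂ ∈ roots
  · exact ⟨t₂, ht₂, j₂, i₂, h₂, hi₂, hjt₂, hti₂⟩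
  -- With three head vertices, `i₁` and `j₂` are both the vertex that is neither root nor coroot.
  have hss' : s ≠ s' := by
    rintro rfl
    exact hab ((hs' a).trans (hs b))
  have hij : i₁ = j₂ := Fin.eq_of_ne_of_ne_of_three hss'
    (by rintro rfl; exact hi₁ hs) (by rintro rfl; exact h₁ hs')
    (by rintro rfl; exact h₂ hs) (by rintro rfl; exact hj₂ hs')
  exact ⟨t₁, ht₁, j₁, i₂, hj₁, hi₂, hjt₁, hti₁.trans (hij ▸ hjt₂.trans hti₂)⟩

theorem stmt_14_general {n : ℕ} (hn : 4 ≤ n) (A : Matrix (Fin n) (Fin n) ℝ)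
    (hA : Reciprocal A)
    (hblock : ∀ i j : Fin n, 3 ≤ i.val ∨ 3 ≤ j.val → A i j = 1)
    (v : Fin n → ℝ) :
    Efficient A v ↔
      ∃ (σ : Equiv.Perm (Fin n)) (w : Fin n → ℝ),
        (∀ i : Fin n, i.val < 3 → σ i = i) ∧
        Efficient A w ∧
        Efficient
          (A.submatrix (Fin.castLE hn : Fin 4 → Fin n) (Fin.castLE hn))
          (w ∘ (Fin.castLE hn : Fin 4 → Fin n)) ∧
        v = w ∘ σ.symm := by
  constructor
  · intro heff
    obtain ⟨t, ht, x, y, hx, hy, hxt, hty⟩ :=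
      exists_tail_between_root_coroot hn hA hblock (heff.forall_reflTransGen hA)
    set σ := Equiv.swap (⟨3, hn⟩ : Fin n) t
    have hfix : ∀ i : Fin n, i.val < 3 → σ i = i := fun i hi =>
      Equiv.swap_apply_of_ne_of_ne (Fin.ne_of_val_ne (by simp; omega))
        (Fin.ne_of_val_ne (by omega))
    have hhead : ∀ i : Fin 3, σ (Fin.castLE (by omega) i) = Fin.castLE (by omega) i := fun i =>
      hfix _ i.isLt
    have htail : σ (Fin.castLE hn 3) = t := Equiv.swap_apply_left _ _
    have hw : ((v ∘ σ) ∘ Fin.castLE hn) ∘ Fin.castSucc = v ∘ Fin.castLE (by omega : 3 ≤ n) :=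
      funext fun i => congrArg v (hhead i)
    refine ⟨σ, v ∘ σ, hfix, heff.comp_perm σ (apply_perm_eq_of_block hblock hfix), ?_,
      by ext; simp⟩
    refine efficient_of_forall_reflTransGen_s14 (fun i => heff.1 _)
      (forall_reflTransGen_of_hub (x := x) (y := y) (fun i => ⟨hblock _ _ (.inl le_rfl),
        hblock _ _ (.inr le_rfl)⟩) ?_ ?_ ?_ ?_)
    · rw [hw]; exact hx
    · rw [hw]; exact hy
    · simpa [hhead, htail] using hxt
    · simpa [hhead, htail] using hty
  · rintro ⟨σ, w, hfix, hw, -, rfl⟩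
    exact hw.comp_perm σ.symm
      (apply_perm_eq_of_block hblock fun i hi => σ.symm_apply_eq.2 (hfix i hi).symm)

/-- For a 3-block perturbed consistent matrix, `v` is efficient iff it is
obtained by permuting the last `n - 3` entries of an efficient vector `w`
whose subvector `w[{1,2,3,4}]` is efficient for `A[{1,2,3,4}]`. -/
theorem stmt_14 {n : ℕ} (hn : 4 ≤ n) (A : Matrix (Fin n) (Fin n) ℝ)
    (hA : Reciprocal A)
    (hblock : ∀ i j : Fin n, 3 ≤ i.val ∨ 3 ≤ j.val → A i j = 1)
    (v : Fin n → ℝ) (hv : ∀ i, 0 < v i) :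
    Efficient A v ↔
      ∃ (σ : Equiv.Perm (Fin n)) (w : Fin n → ℝ),
        (∀ i : Fin n, i.val < 3 → σ i = i) ∧
        Efficient A w ∧
        Efficient
          (A.submatrix (Fin.castLE hn : Fin 4 → Fin n) (Fin.castLE hn))
          (w ∘ (Fin.castLE hn : Fin 4 → Fin n)) ∧
        v = w ∘ σ.symm :=
  stmt_14_general hn A hA hblock v
end

section
/- Let A be the n-by-n reciprocal matrix of block form [[B, J],[J, J]], n >= 4, where B is the 3-by-3 reciprocal matrix with above-diagonal entries a_{12}, a_{13}, a_{23}, a_{13} >= 1. If a_{12} >= 1, a_{23} <= 1, and a_{13} - a_{23} a_{12} >= 0, then the Perron eigenvector of A is efficient for A. -/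
open Relation

def EfficiencyEdge {ι : Type*} (A : Matrix ι ι ℝ) (w : ι → ℝ) (i j : ι) : Prop :=
  A i j ≤ w i / w j

section Efficiency

variable {n : ℕ} {A : Matrix (Fin n) (Fin n) ℝ} {w v : Fin n → ℝ}

lemma div_le_div_of_efficiencyEdge (hw : ∀ i, 0 < w i) (hv : ∀ i, 0 < v i)
    (hdom : ∀ i j, |A i j - v i / v j| ≤ |A i j - w i / w j|) {i j : Fin n}
    (hij : EfficiencyEdge A w i j) : v i / w i ≤ v j / w j := by
  have hvw : v i / v j ≤ w i / w j := by
    have := (abs_le.mp ((hdom i j).trans_eq (abs_of_nonpos (sub_nonpos.mpr hij)))).1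
    linarith
  rw [div_le_div_iff₀ (hv j) (hw j)] at hvw
  rw [div_le_div_iff₀ (hw i) (hw j)]
  linarith

lemma efficient_of_reflTransGen (hw : ∀ i, 0 < w i)
    (hconn : ∀ i j, ReflTransGen (EfficiencyEdge A w) i j) : Efficient A w := by
  refine ⟨hw, fun v hv hdom i j => ?_⟩
  have hmono : ∀ i j, v i / w i ≤ v j / w j := fun i j => by
    induction hconn i j with
    | refl => exact le_rfl
    | tail _ hedge ih => exact ih.trans (div_le_div_of_efficiencyEdge hw hv hdom hedge)
  have hratio : v i * w j = v j * w i :=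
    (div_eq_div_iff (hw i).ne' (hw j).ne').mp (le_antisymm (hmono i j) (hmono j i))
  rw [div_eq_div_iff (hv j).ne' (hw j).ne']
  linarith

end Efficiency

section PerronVector

variable {ι : Type*} [Fintype ι] {A : Matrix ι ι ℝ} {w : ι → ℝ} {μ : ℝ}

lemma pos_of_mulVec_eq_smul (hA : ∀ i j, 0 < A i j) (hw : ∀ i, 0 < w i) (i : ι)
    (heig : A.mulVec w = μ • w) : 0 < μ := by
  have hsum : 0 < (A.mulVec w) i :=
    Finset.sum_pos (fun j _ => mul_pos (hA i j) (hw j)) ⟨i, Finset.mem_univ i⟩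
  rw [heig, Pi.smul_apply, smul_eq_mul] at hsum
  exact pos_of_mul_pos_left hsum (hw i).le

lemma mul_le_of_mulVec_eq_smul {c : ℝ} {i i' : ι} (hw : ∀ j, 0 ≤ w j) (hμ : 0 < μ)
    (heig : A.mulVec w = μ • w) (hrow : ∀ j, c * A i' j ≤ A i j) : c * w i' ≤ w i := by
  have hscaled : μ * (c * w i') ≤ μ * w i := calc
    μ * (c * w i') = ∑ j, c * A i' j * w j := by
      rw [mul_left_comm, ← smul_eq_mul μ, ← Pi.smul_apply, ← heig, Matrix.mulVec, dotProduct,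
        Finset.mul_sum]
      simp only [mul_assoc]
    _ ≤ ∑ j, A i j * w j :=
      Finset.sum_le_sum fun j _ => mul_le_mul_of_nonneg_right (hrow j) (hw j)
    _ = μ * w i := by rw [← smul_eq_mul, ← Pi.smul_apply, ← heig]; rfl
  exact le_of_mul_le_mul_left hscaled hμ

lemma efficiencyEdge_of_row_le {i i' : ι} (hw : ∀ j, 0 < w j) (hμ : 0 < μ)
    (heig : A.mulVec w = μ • w) (hrow : ∀ j, A i i' * A i' j ≤ A i j) :
    EfficiencyEdge A w i i' := by
  rw [EfficiencyEdge, le_div_iff₀ (hw i')]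
  exact mul_le_of_mulVec_eq_smul (fun j => (hw j).le) hμ heig hrow

end PerronVector

lemma reflTransGen_of_block_cycle {n : ℕ} (hn : 3 < n) {r : Fin n → Fin n → Prop}
    (h12 : r ⟨1, by omega⟩ ⟨2, by omega⟩) (h20 : r ⟨2, by omega⟩ ⟨0, by omega⟩)
    (h0k : ∀ k : Fin n, 3 ≤ k.val → r ⟨0, by omega⟩ k)
    (hk1 : ∀ k : Fin n, 3 ≤ k.val → r k ⟨1, by omega⟩) (i j : Fin n) : ReflTransGen r i j := by
  have h10 : ReflTransGen r ⟨1, by omega⟩ ⟨0, by omega⟩ := (ReflTransGen.single h12).tail h20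
  have h01 : ReflTransGen r ⟨0, by omega⟩ ⟨1, by omega⟩ :=
    (ReflTransGen.single (h0k ⟨3, by omega⟩ le_rfl)).tail (hk1 ⟨3, by omega⟩ le_rfl)
  suffices hub : ∀ i, ReflTransGen r i ⟨0, by omega⟩ ∧ ReflTransGen r ⟨0, by omega⟩ i from
    (hub i).1.trans (hub j).2
  rintro ⟨_ | _ | _ | k, hk⟩
  · exact ⟨.refl, .refl⟩
  · exact ⟨h10, h01⟩
  · exact ⟨.single h20, h01.tail h12⟩
  · exact ⟨(ReflTransGen.single (hk1 _ (by simp))).trans h10, .single (h0k _ (by simp))⟩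

-- Entries of `[[B, J], [J, J]]`, indexed from `0` (so `a₁₂` is the entry at `(0, 1)`).
noncomputable def blockEntry (a12 a13 a23 : ℝ) : ℕ → ℕ → ℝ
  | 0, 1 => a12
  | 0, 2 => a13
  | 1, 2 => a23
  | 1, 0 => a12⁻¹
  | 2, 0 => a13⁻¹
  | 2, 1 => a23⁻¹
  | _, _ => 1

section BlockEntry

variable {a12 a13 a23 : ℝ}

lemma blockEntry_of_three_le_left {i : ℕ} (hi : 3 ≤ i) (j : ℕ) :
    blockEntry a12 a13 a23 i j = 1 := by
  obtain ⟨i, rfl⟩ := Nat.exists_eq_add_of_le' hi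
  rcases j with _ | _ | _ | j <;> rfl

lemma blockEntry_of_three_le_right (i : ℕ) {j : ℕ} (hj : 3 ≤ j) :
    blockEntry a12 a13 a23 i j = 1 := by
  obtain ⟨j, rfl⟩ := Nat.exists_eq_add_of_le' hj
  rcases i with _ | _ | _ | i <;> rfl

lemma blockEntry_one_two_mul_le (ha12 : 0 < a12) (ha13 : 0 < a13) (ha23 : a23 ≤ 1)
    (hq : 0 ≤ a13 - a23 * a12) (j : ℕ) :
    blockEntry a12 a13 a23 1 2 * blockEntry a12 a13 a23 2 j ≤ blockEntry a12 a13 a23 1 j := by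
  rcases j with _ | _ | _ | j
  · show a23 * a13⁻¹ ≤ a12⁻¹
    rw [← div_eq_mul_inv, div_le_iff₀ ha13, inv_mul_eq_div, le_div_iff₀ ha12]
    linarith
  · exact mul_inv_le_one
  · exact (mul_one _).le
  · show a23 * 1 ≤ 1
    linarith

lemma blockEntry_two_zero_mul_le (ha13 : 1 ≤ a13) (ha23 : 0 < a23)
    (hq : 0 ≤ a13 - a23 * a12) (j : ℕ) :
    blockEntry a12 a13 a23 2 0 * blockEntry a12 a13 a23 0 j ≤ blockEntry a12 a13 a23 2 j := by
  have ha13' : 0 < a13 := one_pos.trans_le ha13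
  rcases j with _ | _ | _ | j
  · exact (mul_one _).le
  · show a13⁻¹ * a12 ≤ a23⁻¹
    rw [inv_mul_eq_div, div_le_iff₀ ha13', inv_mul_eq_div, le_div_iff₀ ha23]
    linarith
  · exact inv_mul_le_one
  · show a13⁻¹ * 1 ≤ 1
    simpa using inv_le_one_of_one_le₀ ha13

lemma blockEntry_zero_mul_le {k : ℕ} (hk : 3 ≤ k) (ha12 : 1 ≤ a12) (ha13 : 1 ≤ a13) (j : ℕ) :
    blockEntry a12 a13 a23 0 k * blockEntry a12 a13 a23 k j ≤ blockEntry a12 a13 a23 0 j := by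
  rw [blockEntry_of_three_le_right 0 hk, blockEntry_of_three_le_left hk, one_mul]
  rcases j with _ | _ | _ | j
  exacts [le_rfl, ha12, ha13, le_rfl]

lemma blockEntry_mul_one_le {k : ℕ} (hk : 3 ≤ k) (ha12 : 1 ≤ a12) (ha23 : a23 ≤ 1) (j : ℕ) :
    blockEntry a12 a13 a23 k 1 * blockEntry a12 a13 a23 1 j ≤ blockEntry a12 a13 a23 k j := by
  rw [blockEntry_of_three_le_left hk, blockEntry_of_three_le_left hk, one_mul]
  rcases j with _ | _ | _ | j
  exacts [inv_le_one_of_one_le₀ ha12, le_rfl, ha23, le_rfl]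

end BlockEntry

lemma entry_eq_blockEntry {n : ℕ} (hn : 3 ≤ n) {A : Matrix (Fin n) (Fin n) ℝ}
    (hA : Reciprocal A)
    (hblock : ∀ i j : Fin n, 3 ≤ i.val ∨ 3 ≤ j.val → A i j = 1) (hdiag : ∀ i, A i i = 1)
    {a12 a13 a23 : ℝ} (h12 : A ⟨0, by omega⟩ ⟨1, by omega⟩ = a12)
    (h13 : A ⟨0, by omega⟩ ⟨2, by omega⟩ = a13) (h23 : A ⟨1, by omega⟩ ⟨2, by omega⟩ = a23)
    (i j : Fin n) : A i j = blockEntry a12 a13 a23 i j := by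
  by_cases hij : 3 ≤ i.val ∨ 3 ≤ j.val
  · rw [hblock i j hij]
    rcases hij with hi | hj
    exacts [(blockEntry_of_three_le_left hi _).symm, (blockEntry_of_three_le_right _ hj).symm]
  obtain ⟨hi3, hj3⟩ : i.val < 3 ∧ j.val < 3 := by omega
  obtain ⟨i, hi⟩ := i
  obtain ⟨j, hj⟩ := j
  simp only at hi3 hj3
  interval_cases i <;> interval_cases j
  all_goals first
    | exact hdiag _
    | assumption
    | (rw [hA.2]; simp only [h12, h13, h23]; rfl)

/-- Sufficient condition (case 2) for the efficiency of the Perron eigenvector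
of a 3-block perturbed consistent matrix:
`a₁₂ ≥ 1`, `a₂₃ ≤ 1` and `q = a₁₃ - a₂₃ a₁₂ ≥ 0`. -/
theorem stmt_16 {n : ℕ} (hn : 4 ≤ n) (A : Matrix (Fin n) (Fin n) ℝ)
    (hA : Reciprocal A)
    (hblock : ∀ i j : Fin n, 3 ≤ i.val ∨ 3 ≤ j.val → A i j = 1)
    (hdiag : ∀ i, A i i = 1)
    (a12 a13 a23 : ℝ)
    (h12 : A ⟨0, by omega⟩ ⟨1, by omega⟩ = a12)
    (h13 : A ⟨0, by omega⟩ ⟨2, by omega⟩ = a13)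
    (h23 : A ⟨1, by omega⟩ ⟨2, by omega⟩ = a23)
    (ha13 : 1 ≤ a13) (ha12 : 1 ≤ a12) (ha23 : a23 ≤ 1)
    (hq : 0 ≤ a13 - a23 * a12)
    (w : Fin n → ℝ) (hw : ∀ i, 0 < w i) (μ : ℝ)
    (heig : A.mulVec w = μ • w) :
    Efficient A w := by
  have hE := entry_eq_blockEntry (by omega) hA hblock hdiag h12 h13 h23
  have hμ : 0 < μ := pos_of_mulVec_eq_smul hA.1 hw ⟨0, by omega⟩ heig
  have ha23_pos : 0 < a23 := h23 ▸ hA.1 _ _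
  have edge : ∀ i i' : Fin n,
      (∀ j : ℕ, blockEntry a12 a13 a23 i i' * blockEntry a12 a13 a23 i' j ≤
        blockEntry a12 a13 a23 i j) → EfficiencyEdge A w i i' := fun i i' hrow =>
    efficiencyEdge_of_row_le hw hμ heig fun j => by simpa only [hE] using hrow j
  refine efficient_of_reflTransGen hw (reflTransGen_of_block_cycle hn ?_ ?_ ?_ ?_)
  · exact edge _ _ (blockEntry_one_two_mul_le (by linarith) (by linarith) ha23 hq)
  · exact edge _ _ (blockEntry_two_zero_mul_le ha13 ha23_pos hq)
  · exact fun k hk => edge _ _ (blockEntry_zero_mul_le hk ha12 ha13)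
  · exact fun k hk => edge _ _ (blockEntry_mul_one_le hk ha12 ha23)
end
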